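/- arXiv:2311.13340 — 6 statements merged into one kernel-verified Lean document; each statement's English description precedes it below -/
import Mathlib

section
/- (Lemma A.2) Let S be a substochastic matrix of order n (a nonnegative real n×n matrix all of whose row sums are at most 1) with spectral radius λ(S) < 1, and let W be a cycle transversal of the digraph of S. Then for every index v, (I − S)^{−1}(v,v) ≤ 1 + Σ_{w∈W} Σ_{p≥1} S^p(w,w). -/
open scoped Classical ENNReal

/-- The spectral radius of a finite real matrix: the maximal modulus of its complex
eigenvalues (`0` for an empty matrix). -/
noncomputable def specRad {m : Type*} [Fintype m] [DecidableEq m] (A : Matrix m m ℝ) : ℝ :=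
  sSup ((fun z : ℂ => ‖z‖) '' spectrum ℂ (A.map (algebraMap ℝ ℂ)))

variable {V : Type*}

/-- A directed cycle in the digraph on `V` with arc relation `D`. -/
structure DiCycle (D : V → V → Prop) where
  n : ℕ
  pos : 0 < n
  vtx : ZMod n → V
  inj : Function.Injective vtx
  arc : ∀ i : ZMod n, D (vtx i) (vtx (i + 1))

/-- A cycle transversal: every cycle has a vertex in `T`. -/
def IsCycleTransversal (D : V → V → Prop) (T : Set V) : Prop :=
  ∀ γ : DiCycle D, ∃ i, γ.vtx i ∈ T

/-- Every closed positive walk visits a cycle transversal. -/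
lemma closedWalk_meets {D : V → V → Prop} {T : Set V}
    (hT : IsCycleTransversal D T) :
    ∀ d : ℕ, 0 < d → ∀ h : ℕ → V, h d = h 0 → (∀ t < d, D (h t) (h (t + 1))) →
      ∃ t < d, h t ∈ T := by
  intro d
  induction d using Nat.strong_induction_on with
  | _ d IH =>
    intro hd h hclosed harc
    by_cases hinj : ∀ a < d, ∀ b < d, h a = h b → a = b
    · have hne : NeZero d := ⟨by omega⟩
      have hlt : ∀ i : ZMod d, (i : ZMod d).val < d := fun i => ZMod.val_lt i
      have harcv : ∀ i : ZMod d, D (h i.val) (h ((i + 1).val)) := by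
        intro i
        have h1 := harc i.val (hlt i)
        have hicast : ((i.val : ℕ) : ZMod d) = i := ZMod.natCast_rightInverse i
        have hval : h ((i + 1 : ZMod d).val) = h (i.val + 1) := by
          rcases eq_or_lt_of_le (Nat.succ_le_of_lt (hlt i)) with heq | hlt'
          · rw [Nat.succ_eq_add_one] at heq
            have h2 : (i + 1 : ZMod d) = 0 := by
              rw [← hicast, ← Nat.cast_one, ← Nat.cast_add, heq, ZMod.natCast_self]
            rw [h2, ZMod.val_zero, ← hclosed, heq]
          · have h2 : (i + 1 : ZMod d).val = i.val + 1 := by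
              conv_lhs => rw [← hicast]
              rw [← Nat.cast_one, ← Nat.cast_add, ZMod.val_cast_of_lt hlt']
            rw [h2]
        rw [hval]; exact h1
      obtain ⟨i, hi⟩ := hT
        { n := d
          pos := hd
          vtx := fun i => h i.val
          inj := fun i j hij =>
            ZMod.val_injective d (hinj i.val (hlt i) j.val (hlt j) hij)
          arc := harcv }
      exact ⟨_, hlt i, hi⟩
    · push_neg at hinj
      obtain ⟨a, ha, b, hb, hab, hne⟩ := hinj
      have key : ∀ a b : ℕ, a < d → b < d → h a = h b → a < b → ∃ t < d, h t ∈ T := by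
        clear hab hne ha hb
        intro a b ha hb hab hlt
        set e := b - a with he
        have hepos : 0 < e := by omega
        set d' := d - e with hd'
        have hd'pos : 0 < d' := by omega
        have hd'lt : d' < d := by omega
        set h' : ℕ → V := fun t => if t < a then h t else h (t + e) with hh'
        have hda : ¬ d' < a := by omega
        have hclosed' : h' d' = h' 0 := by
          rcases Nat.eq_zero_or_pos a with h0 | h0
          · have e1 : h' d' = h (d' + e) := by simp only [hh', if_neg hda]
            have e2 : h' 0 = h (0 + e) := by simp only [hh']; rw [if_neg (by omega)]
            rw [e1, e2]
            have h3 : d' + e = d := by omega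
            rw [h3, hclosed]
            have h4 : (0 : ℕ) + e = b := by omega
            rw [h4, ← hab, h0]
          · have e1 : h' d' = h (d' + e) := by simp only [hh', if_neg hda]
            have e2 : h' 0 = h 0 := by simp only [hh']; rw [if_pos h0]
            rw [e1, e2]
            have h3 : d' + e = d := by omega
            rw [h3, hclosed]
        have harc' : ∀ t < d', D (h' t) (h' (t + 1)) := by
          intro t ht
          rcases lt_trichotomy (t + 1) a with h1 | h1 | h1
          · have e1 : h' t = h t := by simp only [hh']; rw [if_pos (by omega)]
            have e2 : h' (t + 1) = h (t + 1) := by simp only [hh']; rw [if_pos h1]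
            rw [e1, e2]; exact harc t (by omega)
          · have e1 : h' t = h t := by simp only [hh']; rw [if_pos (by omega)]
            have e2 : h' (t + 1) = h (t + 1 + e) := by simp only [hh']; rw [if_neg (by omega)]
            rw [e1, e2]
            have h3 : t + 1 + e = b := by omega
            rw [h3, ← hab, ← h1]
            exact harc t (by omega)
          · have e1 : h' t = h (t + e) := by simp only [hh']; rw [if_neg (by omega)]
            have e2 : h' (t + 1) = h (t + 1 + e) := by simp only [hh']; rw [if_neg (by omega)]
            rw [e1, e2]
            have h3 : t + 1 + e = t + e + 1 := by omega
            rw [h3]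
            exact harc (t + e) (by omega)
        obtain ⟨t, ht, htT⟩ := IH d' hd'lt hd'pos h' hclosed' harc'
        by_cases htc : t < a
        · refine ⟨t, by omega, ?_⟩
          have e1 : h' t = h t := by simp only [hh']; rw [if_pos htc]
          rwa [e1] at htT
        · refine ⟨t + e, by omega, ?_⟩
          have e1 : h' t = h (t + e) := by simp only [hh']; rw [if_neg htc]
          rwa [e1] at htT
      rcases Nat.lt_or_ge a b with hlt | hge
      · exact key a b ha hb hab hlt
      · exact key b a hb ha hab.symm (by omega)

section Walks

variable {n : ℕ} (S : Matrix (Fin n) (Fin n) ℝ)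

/-- Weight of the walk `a, f 0, …, f (q-1), b`. -/
noncomputable def pw : (q : ℕ) → Fin n → (Fin q → Fin n) → Fin n → ℝ
  | 0, a, _, b => S a b
  | (q + 1), a, f, b => S a (f 0) * pw q (f 0) (Fin.tail f) b

lemma pow_apply_eq_sum_pw (q : ℕ) (a b : Fin n) :
    (S ^ (q + 1)) a b = ∑ f : Fin q → Fin n, pw S q a f b := by
  induction q generalizing a b with
  | zero =>
    rw [pow_one]
    simp [pw]
  | succ q ih =>
    have h1 : ∀ c, (S ^ (q + 1)) c b = ∑ g : Fin q → Fin n, pw S q c g b := fun c => ih c b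
    calc (S ^ (q + 1 + 1)) a b = ∑ c, ∑ g : Fin q → Fin n, S a c * pw S q c g b := by
          rw [pow_succ', Matrix.mul_apply]
          simp_rw [h1, Finset.mul_sum]
      _ = ∑ x : Fin n × (Fin q → Fin n), S a x.1 * pw S q x.1 x.2 b :=
          (Fintype.sum_prod_type
            (f := fun x : Fin n × (Fin q → Fin n) => S a x.1 * pw S q x.1 x.2 b)).symm
      _ = ∑ f : Fin (q + 1) → Fin n, pw S (q + 1) a f b := by
          refine Fintype.sum_equiv (Fin.consEquiv (fun _ => Fin n)) _ _ fun x => ?_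
          simp [pw, Fin.consEquiv]

lemma pw_eq (q : ℕ) (a : Fin n) (f : Fin q → Fin n) (b : Fin n) :
    pw S q a f b =
      (∏ t : Fin q, S ((Fin.cons a f : Fin (q+1) → Fin n) t.castSucc) (f t)) *
        S ((Fin.cons a f : Fin (q+1) → Fin n) (Fin.last q)) b := by
  induction q generalizing a with
  | zero => simp [pw]
  | succ q ih =>
    have hc : Fin.cons (f 0) (Fin.tail f) = f := Fin.cons_self_tail f
    rw [pw, ih (f 0) (Fin.tail f), hc, Fin.prod_univ_succ]
    simp only [Fin.cons_zero, Fin.castSucc_zero, Fin.cons_succ, Fin.succ_last]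
    have h2 : ∀ t : Fin q, (Fin.cons a f : Fin (q+2) → Fin n) (t.succ).castSucc = f t.castSucc := by
      intro t
      rw [← Fin.succ_castSucc, Fin.cons_succ]
    have h3 : ∀ t : Fin q, Fin.tail f t = f t.succ := fun t => rfl
    have h4 : (Fin.cons a f : Fin (q+2) → Fin n) (Fin.last (q+1)) = f (Fin.last q) := by
      rw [← Fin.succ_last, Fin.cons_succ]
    simp_rw [h2, h3, h4]
    ring

/-- Cyclic weight of a closed walk `c 0, c 1, …, c p, c 0`. -/
noncomputable def CW (p : ℕ) (c : Fin (p + 1) → Fin n) : ℝ :=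
  ∏ t : Fin (p + 1), S (c t) (c (t + 1))

lemma cw_cons (p : ℕ) (v : Fin n) (f : Fin p → Fin n) :
    CW S p (Fin.cons v f) = pw S p v f v := by
  rw [pw_eq, CW, Fin.prod_univ_castSucc]
  congr 1
  · refine Finset.prod_congr rfl fun t _ => ?_
    congr 1
    rw [Fin.coeSucc_eq_succ, Fin.cons_succ]
  · congr 1
    rw [Fin.last_add_one, Fin.cons_zero]

open Fin.CommRing in
lemma cw_rot (p : ℕ) (c : Fin (p + 1) → Fin n) (i : Fin (p + 1)) :
    CW S p (fun t => c (t + i)) = CW S p c := by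
  rw [CW, CW]
  refine Fintype.prod_equiv (Equiv.addRight i) _ _ fun t => ?_
  simp only [Equiv.coe_addRight]
  congr 2
  ring

lemma pow_diag' (p : ℕ) (v : Fin n) :
    (S ^ (p + 1)) v v =
      ∑ c ∈ Finset.univ.filter (fun c : Fin (p+1) → Fin n => c 0 = v), CW S p c := by
  rw [pow_apply_eq_sum_pw]
  refine (Finset.sum_bij' (fun (c : Fin (p+1) → Fin n) _ => (Fin.tail c : Fin p → Fin n))
    (fun f _ => (Fin.cons v f : Fin (p+1) → Fin n)) ?_ ?_ ?_ ?_ ?_).symm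
  · intro c _; exact Finset.mem_univ _
  · intro f _
    simp [Fin.cons_zero]
  · intro c hc
    have h0 : c 0 = v := (Finset.mem_filter.1 hc).2
    have h1 := Fin.cons_self_tail c
    rw [h0] at h1
    exact h1
  · intro f _
    show Fin.tail (Fin.cons v f : Fin (p+1) → Fin n) = f
    funext t
    exact Fin.cons_succ (α := fun _ : Fin (p+1) => Fin n) v f t
  · intro c hc
    have h0 : c 0 = v := (Finset.mem_filter.1 hc).2
    have h1 := Fin.cons_self_tail c
    rw [h0] at h1
    show CW S p c = pw S p v (Fin.tail c) v
    rw [← cw_cons, h1]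

open Fin.CommRing in
lemma diag_le_transversal (hnonneg : ∀ i j, 0 ≤ S i j) (W : Finset (Fin n))
    (hW : IsCycleTransversal (fun v w : Fin n => 0 < S v w) ↑W) (p : ℕ) (v : Fin n) :
    (S ^ (p + 1)) v v ≤ ∑ w ∈ W, (S ^ (p + 1)) w w := by
  classical
  have cw_nonneg : ∀ c : Fin (p+1) → Fin n, 0 ≤ CW S p c := fun c =>
    Finset.prod_nonneg fun t _ => hnonneg _ _
  have pos_arc : ∀ c : Fin (p+1) → Fin n, 0 < CW S p c → ∀ t, 0 < S (c t) (c (t+1)) := by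
    intro c hc t
    rcases lt_or_eq_of_le (hnonneg (c t) (c (t+1))) with h | h
    · exact h
    · exfalso
      rw [CW, Finset.prod_eq_zero (Finset.mem_univ t) h.symm] at hc
      exact lt_irrefl 0 hc
  have exW : ∀ c : Fin (p+1) → Fin n, 0 < CW S p c → ∃ k < p + 1, c ↑k ∈ W := by
    intro c hc
    have hcl : c ↑(p+1) = c ↑(0:ℕ) := by
      rw [Nat.cast_zero, Fin.natCast_self]
    have harcs : ∀ t < p + 1, 0 < S (c ↑t) (c ↑(t+1)) := by
      intro t _
      have h1 : ((t+1 : ℕ) : Fin (p+1)) = (↑t) + 1 := by push_cast; ring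
      rw [h1]
      exact pos_arc c hc ↑t
    obtain ⟨t, ht, hT⟩ := closedWalk_meets hW (p+1) (Nat.succ_pos p) (fun t => c ↑t) hcl harcs
    exact ⟨t, ht, hT⟩
  set iN : (Fin (p+1) → Fin n) → ℕ := fun c => sInf {k | c ↑k ∈ W} with hiN
  have iN_mem : ∀ c, 0 < CW S p c → c ↑(iN c) ∈ W := by
    intro c hc; obtain ⟨k, _, hkW⟩ := exW c hc
    exact Nat.sInf_mem (s := {k | c ↑k ∈ W}) ⟨k, hkW⟩
  have iN_lt : ∀ c, 0 < CW S p c → iN c < p + 1 := by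
    intro c hc; obtain ⟨k, hk, hkW⟩ := exW c hc
    exact lt_of_le_of_lt (Nat.sInf_le hkW) hk
  have iN_min : ∀ c : Fin (p+1) → Fin n, ∀ m, m < iN c → c ↑m ∉ W := fun c m hm =>
    Nat.notMem_of_lt_sInf hm
  set Φ : (Fin (p+1) → Fin n) → (Fin n) × (Fin (p+1) → Fin n) :=
    fun c => (c ↑(iN c), fun t => c (t + ↑(iN c))) with hΦ
  set A : Finset (Fin (p+1) → Fin n) :=
    (Finset.univ.filter (fun c : Fin (p+1) → Fin n => c 0 = v)).filter
      (fun c => 0 < CW S p c) with hA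
  -- the exchange argument
  have noncross : ∀ c1 c2 : Fin (p+1) → Fin n, c1 0 = v → c2 0 = v →
      0 < CW S p c1 → 0 < CW S p c2 →
      (∀ t : Fin (p+1), c1 (t + ↑(iN c1)) = c2 (t + ↑(iN c2))) → iN c1 < iN c2 → False := by
    intro c1 c2 h10 h20 hc1 hc2 hrot hlt
    have h2lt : iN c2 < p + 1 := iN_lt c2 hc2
    have rotEq : ∀ s : Fin (p+1), c2 s = c1 (s - ↑(iN c2) + ↑(iN c1)) := by
      intro s
      have h1 := hrot (s - ↑(iN c2))
      rw [sub_add_cancel] at h1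
      exact h1.symm
    set d := iN c2 - iN c1 with hd
    have hdpos : 0 < d := by omega
    have hcast : ((d : ℕ) : Fin (p+1)) = (↑(iN c2) : Fin (p+1)) - ↑(iN c1) := by
      rw [hd, Nat.cast_sub (le_of_lt hlt)]
    have hclosed2 : c2 ↑d = c2 ↑(0:ℕ) := by
      have e1 : c2 ↑d = c1 ((↑(iN c2) - ↑(iN c1)) - ↑(iN c2) + ↑(iN c1)) := by
        rw [hcast, rotEq]
      have e2 : ((↑(iN c2) : Fin (p+1)) - ↑(iN c1)) - ↑(iN c2) + ↑(iN c1) = 0 := by ring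
      rw [e1, e2]
      rw [Nat.cast_zero, h10, h20]
    have harcs2 : ∀ t < d, 0 < S (c2 ↑t) (c2 ↑(t+1)) := by
      intro t _
      have h1 : ((t+1 : ℕ) : Fin (p+1)) = (↑t) + 1 := by push_cast; ring
      rw [h1]
      exact pos_arc c2 hc2 ↑t
    obtain ⟨t, htd, htW⟩ := closedWalk_meets hW d hdpos (fun t => c2 ↑t) hclosed2 harcs2
    exact iN_min c2 t (by omega) htW
  have hinj : ∀ c1 ∈ A, ∀ c2 ∈ A, Φ c1 = Φ c2 → c1 = c2 := by
    intro c1 hc1 c2 hc2 heq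
    obtain ⟨hm1, hp1⟩ := Finset.mem_filter.1 hc1
    obtain ⟨hm2, hp2⟩ := Finset.mem_filter.1 hc2
    have h10 : c1 0 = v := (Finset.mem_filter.1 hm1).2
    have h20 : c2 0 = v := (Finset.mem_filter.1 hm2).2
    have hrot : ∀ t : Fin (p+1), c1 (t + ↑(iN c1)) = c2 (t + ↑(iN c2)) := by
      intro t
      have := congrArg Prod.snd heq
      exact congrFun this t
    rcases lt_trichotomy (iN c1) (iN c2) with hlt | heqi | hgt
    · exact absurd (noncross c1 c2 h10 h20 hp1 hp2 hrot hlt) (fun h => h.elim)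
    · funext s
      have h1 := hrot (s - ↑(iN c1))
      rw [sub_add_cancel, heqi, sub_add_cancel] at h1
      exact h1
    · exact absurd (noncross c2 c1 h20 h10 hp2 hp1 (fun t => (hrot t).symm) hgt)
        (fun h => h.elim)
  -- assemble
  set g : (Fin n) × (Fin (p+1) → Fin n) → ℝ :=
    fun x => if x.2 0 = x.1 then CW S p x.2 else 0 with hg
  have hval : ∀ c ∈ A, CW S p c = g (Φ c) := by
    intro c hc
    obtain ⟨_, hp1⟩ := Finset.mem_filter.1 hc
    have h1 : (Φ c).2 0 = (Φ c).1 := by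
      show c (0 + ↑(iN c)) = c ↑(iN c)
      rw [zero_add]
    have h2 : g (Φ c) = CW S p (fun t => c (t + ↑(iN c))) := by
      rw [hg]
      dsimp only
      rw [if_pos h1]
    rw [h2, cw_rot]
  have himg : ∀ c ∈ A, Φ c ∈ W ×ˢ (Finset.univ : Finset (Fin (p+1) → Fin n)) := by
    intro c hc
    obtain ⟨_, hp1⟩ := Finset.mem_filter.1 hc
    exact Finset.mem_product.2 ⟨iN_mem c hp1, Finset.mem_univ _⟩
  calc (S ^ (p + 1)) v v
      = ∑ c ∈ Finset.univ.filter (fun c : Fin (p+1) → Fin n => c 0 = v), CW S p c :=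
        pow_diag' S p v
    _ = ∑ c ∈ A, CW S p c := by
        rw [hA]
        refine (Finset.sum_filter_of_ne ?_).symm
        intro c _ hne
        rcases lt_or_eq_of_le (cw_nonneg c) with h | h
        · exact h
        · exact absurd h.symm hne
    _ = ∑ c ∈ A, g (Φ c) := Finset.sum_congr rfl hval
    _ = ∑ x ∈ A.image Φ, g x := (Finset.sum_image hinj).symm
    _ ≤ ∑ x ∈ W ×ˢ (Finset.univ : Finset (Fin (p+1) → Fin n)), g x := by
        refine Finset.sum_le_sum_of_subset_of_nonneg ?_ ?_
        · intro x hx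
          obtain ⟨c, hc, rfl⟩ := Finset.mem_image.1 hx
          exact himg c hc
        · intro x _ _
          rw [hg]
          dsimp only
          split
          · exact cw_nonneg _
          · exact le_refl 0
    _ = ∑ w ∈ W, (S ^ (p + 1)) w w := by
        rw [Finset.sum_product]
        refine Finset.sum_congr rfl fun w _ => ?_
        rw [pow_diag', Finset.sum_filter]

end Walks

section Analytic

open Filter Topology

attribute [local instance] Matrix.linftyOpNormedRing Matrix.linftyOpNormedAlgebra

lemma key_bound {n : ℕ} (S : Matrix (Fin n) (Fin n) ℝ) (hrad : specRad S < 1) :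
    ∃ r : ℝ, 0 ≤ r ∧ r < 1 ∧ ∃ K : ℕ, ∀ k ≥ K, ∀ i j, |(S ^ k) i j| ≤ r ^ k := by
  haveI : CompleteSpace (Matrix (Fin n) (Fin n) ℂ) := FiniteDimensional.complete ℂ _
  set C : Matrix (Fin n) (Fin n) ℂ := S.map (algebraMap ℝ ℂ) with hC
  have hCpow : ∀ k : ℕ, C ^ k = (S ^ k).map (algebraMap ℝ ℂ) := by
    intro k
    have h1 : (algebraMap ℝ ℂ).mapMatrix (S ^ k) = ((algebraMap ℝ ℂ).mapMatrix S) ^ k :=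
      map_pow _ _ _
    rw [RingHom.mapMatrix_apply, RingHom.mapMatrix_apply] at h1
    rw [hC, h1]
  have hb : BddAbove ((fun z : ℂ => ‖z‖) '' spectrum ℂ C) :=
    ((spectrum.isCompact C).image continuous_norm).bddAbove
  have hle : spectralRadius ℂ C ≤ ENNReal.ofReal (specRad S) := by
    show (⨆ z ∈ spectrum ℂ C, (‖z‖₊ : ℝ≥0∞)) ≤ ENNReal.ofReal (specRad S)
    refine iSup₂_le fun z hz => ?_
    have h1 : ‖z‖ ≤ specRad S := le_csSup hb ⟨z, hz, rfl⟩
    calc (‖z‖₊ : ℝ≥0∞) = ENNReal.ofReal ‖z‖ := by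
          rw [ofReal_norm, enorm_eq_nnnorm]
      _ ≤ ENNReal.ofReal (specRad S) := ENNReal.ofReal_le_ofReal h1
  have hspec : spectralRadius ℂ C < 1 :=
    lt_of_le_of_lt hle (ENNReal.ofReal_lt_one.2 hrad)
  have hgel := spectrum.pow_nnnorm_pow_one_div_tendsto_nhds_spectralRadius C
  obtain ⟨ρ, hρ1, hρ2⟩ := exists_between hspec
  have hρtop : ρ ≠ ⊤ := ne_top_of_lt hρ2
  set r := ρ.toReal with hr
  have hr0 : 0 ≤ r := ENNReal.toReal_nonneg
  have hr1 : r < 1 := by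
    have h1 := (ENNReal.toReal_lt_toReal hρtop (by simp : (1:ℝ≥0∞) ≠ ⊤)).2 hρ2
    simpa using h1
  have hev : ∀ᶠ k : ℕ in atTop, (‖C ^ k‖₊ : ℝ≥0∞) ^ (1 / (k:ℝ)) < ρ :=
    hgel.eventually_lt_const hρ1
  obtain ⟨K0, hK0⟩ := Filter.eventually_atTop.1 hev
  refine ⟨r, hr0, hr1, max K0 1, fun k hk i j => ?_⟩
  have hk0 : K0 ≤ k := le_trans (le_max_left _ _) hk
  have hk1 : 1 ≤ k := le_trans (le_max_right _ _) hk
  have h1 : (‖C ^ k‖₊ : ℝ≥0∞) ^ (1 / (k:ℝ)) < ρ := hK0 k hk0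
  have h2 : (‖C ^ k‖₊ : ℝ≥0∞) ≤ ρ ^ k := by
    have h3 : ((‖C ^ k‖₊ : ℝ≥0∞) ^ (1 / (k:ℝ))) ^ (k:ℕ) ≤ ρ ^ k :=
      pow_le_pow_left₀ zero_le h1.le k
    calc (‖C ^ k‖₊ : ℝ≥0∞)
        = ((‖C ^ k‖₊ : ℝ≥0∞) ^ (1 / (k:ℝ))) ^ (k:ℕ) := by
          rw [← ENNReal.rpow_natCast (((‖C ^ k‖₊ : ℝ≥0∞)) ^ (1 / (k:ℝ))) k, ← ENNReal.rpow_mul,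
            one_div, inv_mul_cancel₀ (by exact_mod_cast (by omega : k ≠ 0)), ENNReal.rpow_one]
      _ ≤ ρ ^ k := h3
  have h4 : ‖C ^ k‖ ≤ r ^ k := by
    have h5 := ENNReal.toReal_mono (ENNReal.pow_ne_top hρtop) h2
    rw [ENNReal.coe_toReal, coe_nnnorm, ENNReal.toReal_pow] at h5
    exact h5
  have h6 : ‖(C ^ k) i j‖₊ ≤ ‖C ^ k‖₊ := by
    rw [Matrix.linfty_opNNNorm_def]
    exact le_trans
      (Finset.single_le_sum (f := fun j' => ‖(C ^ k) i j'‖₊) (fun _ _ => zero_le)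
        (Finset.mem_univ j))
      (Finset.le_sup (f := fun i => ∑ j : Fin n, ‖(C ^ k) i j‖₊) (Finset.mem_univ i))
  have h7 : |(S ^ k) i j| = ‖(C ^ k) i j‖ := by
    rw [hCpow k, Matrix.map_apply]
    rw [show (algebraMap ℝ ℂ) ((S ^ k) i j) = (((S ^ k) i j : ℝ) : ℂ) from rfl,
      Complex.norm_real, Real.norm_eq_abs]
  calc |(S ^ k) i j| = ‖(C ^ k) i j‖ := h7
    _ ≤ ‖C ^ k‖ := by
        rw [← coe_nnnorm, ← coe_nnnorm]
        exact_mod_cast h6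
    _ ≤ r ^ k := h4

end Analytic

set_option maxHeartbeats 1000000 in
open Filter Topology in
/-- Lemma A.2. If `W` is a cycle transversal of the digraph of a
substochastic matrix `S` of order `n` with `λ(S) < 1`, then for every index `v`,
`(I − S)⁻¹(v,v) ≤ 1 + Σ_{w ∈ W} Σ_{p ≥ 1} S^p(w,w)`. -/
theorem stmt10 {n : ℕ} (S : Matrix (Fin n) (Fin n) ℝ)
    (hnonneg : ∀ i j, 0 ≤ S i j) (hsub : ∀ i, ∑ j, S i j ≤ 1)
    (hrad : specRad S < 1)
    (W : Finset (Fin n))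
    (hW : IsCycleTransversal (fun v w : Fin n => 0 < S v w) ↑W)
    (v : Fin n) :
    (1 - S)⁻¹ v v ≤ 1 + ∑ w ∈ W, ∑' p : ℕ, (S ^ (p + 1)) w w := by
  classical
  obtain ⟨r, hr0, hr1, K, hK⟩ := key_bound S hrad
  -- entries of powers are nonnegative
  have hpos : ∀ p (i j : Fin n), 0 ≤ (S ^ p) i j := by
    intro p
    induction p with
    | zero =>
      intro i j
      rw [pow_zero]
      by_cases h : i = j <;> simp [Matrix.one_apply, h]
    | succ p ih =>
      intro i j
      rw [pow_succ, Matrix.mul_apply]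
      exact Finset.sum_nonneg fun k _ => mul_nonneg (ih i k) (hnonneg k j)
  -- summability of entries
  have hsm : ∀ i j : Fin n, Summable fun p => (S ^ p) i j := by
    intro i j
    rw [← summable_nat_add_iff K]
    refine Summable.of_nonneg_of_le (fun k => hpos _ _ _) (fun k => ?_)
      ((summable_nat_add_iff K).2 (summable_geometric_of_lt_one hr0 hr1))
    exact le_trans (le_abs_self _) (hK (k + K) (by omega) i j)
  -- entries of powers tend to zero
  have htend0 : ∀ i j : Fin n, Tendsto (fun N => (S ^ N) i j) atTop (𝓝 0) := by
    intro i j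
    refine squeeze_zero_norm' ?_ (tendsto_pow_atTop_nhds_zero_of_lt_one hr0 hr1)
    refine Filter.eventually_atTop.2 ⟨K, fun k hk => ?_⟩
    simpa [Real.norm_eq_abs] using hK k hk i j
  -- telescoping sums
  have hTsum : ∀ i j : Fin n, (∑' p, ((S ^ p) i j - (S ^ (p+1)) i j))
      = (1 : Matrix (Fin n) (Fin n) ℝ) i j := by
    intro i j
    set f : ℕ → ℝ := fun p => (S ^ p) i j with hf
    have hs1 : Summable f := hsm i j
    have hs2 : Summable fun p => f (p + 1) := (summable_nat_add_iff 1).2 hs1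
    have hsub' : Summable fun p => f p - f (p + 1) := hs1.sub hs2
    have hten := hsub'.hasSum.tendsto_sum_nat
    have heq : ∀ N, ∑ p ∈ Finset.range N, (f p - f (p + 1)) = f 0 - f N := fun N =>
      Finset.sum_range_sub' f N
    rw [show (fun N => ∑ p ∈ Finset.range N, (f p - f (p + 1))) = fun N => f 0 - f N from
      funext heq] at hten
    have hten2 : Tendsto (fun N => f 0 - f N) atTop (𝓝 (f 0 - 0)) :=
      tendsto_const_nhds.sub (htend0 i j)
    have := tendsto_nhds_unique hten hten2
    rw [this, sub_zero]
    show (S ^ 0) i j = (1 : Matrix (Fin n) (Fin n) ℝ) i j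
    rw [pow_zero]
  set T : Matrix (Fin n) (Fin n) ℝ := Matrix.of fun i j => ∑' p, (S ^ p) i j with hT
  have hright : (1 - S) * T = 1 := by
    ext i j
    rw [Matrix.mul_apply]
    calc ∑ k, (1 - S) i k * T k j
        = ∑ k, ∑' p, (1 - S) i k * (S ^ p) k j := by
          refine Finset.sum_congr rfl fun k _ => ?_
          rw [hT]
          exact (tsum_mul_left).symm
      _ = ∑' p, ∑ k, (1 - S) i k * (S ^ p) k j :=
          (Summable.tsum_finsetSum fun k _ => (hsm k j).mul_left _).symm
      _ = ∑' p, ((S ^ p) i j - (S ^ (p + 1)) i j) := by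
          refine tsum_congr fun p => ?_
          rw [← Matrix.mul_apply, Matrix.sub_mul, Matrix.one_mul, ← pow_succ',
            Matrix.sub_apply]
      _ = (1 : Matrix (Fin n) (Fin n) ℝ) i j := hTsum i j
  have hinv : (1 - S)⁻¹ = T := Matrix.inv_eq_right_inv hright
  rw [hinv]
  show (∑' p, (S ^ p) v v) ≤ _
  rw [Summable.tsum_eq_zero_add (hsm v v), pow_zero, Matrix.one_apply_eq]
  refine add_le_add_right ?_ 1
  have hshift : ∀ u : Fin n, Summable (fun p : ℕ => (S ^ (p + 1)) u u) := by
    intro u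
    exact (summable_nat_add_iff (f := fun p => (S ^ p) u u) 1).2 (hsm u u)
  have hsmr : Summable (fun p : ℕ => ∑ w ∈ W, (S ^ (p + 1)) w w) :=
    summable_sum fun w _ => hshift w
  calc (∑' p, (S ^ (p + 1)) v v)
      ≤ ∑' p, ∑ w ∈ W, (S ^ (p + 1)) w w :=
        Summable.tsum_le_tsum (fun p => diag_le_transversal S hnonneg W hW p v) (hshift v) hsmr
    _ = ∑ w ∈ W, ∑' p, (S ^ (p + 1)) w w :=
        Summable.tsum_finsetSum fun w _ => hshift w
end

section
/- Let S be a substochastic matrix of order n (a nonnegative real n×n matrix all of whose row sums are at most 1) with spectral radius λ(S) < 1. Then 1/(n·(1 − λ(S))) ≤ max over indices v of (I − S)^{−1}(v,v) ≤ 1 / det(I − S). -/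
open scoped Classical ENNReal

open Filter Finset Matrix

attribute [local instance] Matrix.linftyOpNormedRing Matrix.linftyOpNormedAlgebra

namespace Stmt12Aux

section GenDim

variable {m : ℕ}




/-- Entries of powers of an entrywise-nonnegative matrix are nonnegative. -/
lemma pow_entry_nonneg {W : Matrix (Fin m) (Fin m) ℝ} (hW : ∀ i j, 0 ≤ W i j) :
    ∀ k i j, 0 ≤ (W ^ k) i j := by
  intro k
  induction k with
  | zero =>
    intro i j
    by_cases h : i = j <;> simp [pow_zero, Matrix.one_apply, h]
  | succ k ih =>
    intro i j
    rw [pow_succ, Matrix.mul_apply]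
    exact Finset.sum_nonneg fun l _ => mul_nonneg (ih i l) (hW l j)

/-- Weighted column sums of powers contract geometrically. -/
lemma pow_col_bound {W : Matrix (Fin m) (Fin m) ℝ} {c : Fin m → ℝ} {θ : ℝ}
    (hW : ∀ i j, 0 ≤ W i j) (hθ0 : 0 ≤ θ)
    (hcol : ∀ j, ∑ i, c i * W i j ≤ θ * c j) :
    ∀ k j, ∑ i, c i * (W ^ k) i j ≤ θ ^ k * c j := by
  intro k
  induction k with
  | zero =>
    intro j
    simp only [pow_zero, Matrix.one_apply]
    rw [Finset.sum_eq_single j]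
    · simp
    · intro b _ hb; simp [hb]
    · simp
  | succ k ih =>
    intro j
    have : ∑ i, c i * (W ^ (k + 1)) i j
        = ∑ l, (∑ i, c i * (W ^ k) i l) * W l j := by
      simp only [pow_succ, Matrix.mul_apply, Finset.mul_sum, Finset.sum_mul]
      rw [Finset.sum_comm]
      congr 1; ext l; congr 1; ext i; ring
    rw [this]
    calc ∑ l, (∑ i, c i * (W ^ k) i l) * W l j
        ≤ ∑ l, (θ ^ k * c l) * W l j := by
          refine Finset.sum_le_sum fun l _ => mul_le_mul_of_nonneg_right (ih l) (hW l j)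
      _ = θ ^ k * ∑ l, c l * W l j := by rw [Finset.mul_sum]; congr 1; ext l; ring
      _ ≤ θ ^ k * (θ * c j) := mul_le_mul_of_nonneg_left (hcol j) (pow_nonneg hθ0 k)
      _ = θ ^ (k + 1) * c j := by ring

lemma pow_entry_le {W : Matrix (Fin m) (Fin m) ℝ} {c : Fin m → ℝ} {θ : ℝ}
    (hW : ∀ i j, 0 ≤ W i j) (hθ0 : 0 ≤ θ) (hc1 : ∀ j, 1 ≤ c j)
    (hcol : ∀ j, ∑ i, c i * W i j ≤ θ * c j) :
    ∀ k i j, (W ^ k) i j ≤ θ ^ k * c j := by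
  intro k i j
  have h1 : (W ^ k) i j ≤ c i * (W ^ k) i j := by
    nlinarith [pow_entry_nonneg hW k i j, hc1 i]
  have h2 : c i * (W ^ k) i j ≤ ∑ i', c i' * (W ^ k) i' j := by
    refine Finset.single_le_sum (f := fun i' => c i' * (W ^ k) i' j) (fun i' _ => ?_) (Finset.mem_univ i)
    exact mul_nonneg (le_trans zero_le_one (hc1 i')) (pow_entry_nonneg hW k i' j)
  exact le_trans h1 (le_trans h2 (pow_col_bound hW hθ0 hcol k j))

/-- `det (1 - W) ≠ 0` for a certified matrix. -/
lemma det_one_sub_ne_zero {W : Matrix (Fin m) (Fin m) ℝ} {c : Fin m → ℝ} {θ : ℝ}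
    (hW : ∀ i j, 0 ≤ W i j) (hθ1 : θ < 1) (hc1 : ∀ j, 1 ≤ c j)
    (hcol : ∀ j, ∑ i, c i * W i j ≤ θ * c j) :
    (1 - W).det ≠ 0 := by
  intro hdet
  obtain ⟨x, hx0, hxv⟩ := (Matrix.exists_mulVec_eq_zero_iff).mpr hdet
  have hx : ∀ i, x i = ∑ j, W i j * x j := by
    intro i
    have h := congrFun hxv i
    simp only [Matrix.mulVec, dotProduct, Matrix.sub_apply, Matrix.one_apply, sub_mul,
      Finset.sum_sub_distrib, Pi.zero_apply] at h
    have h1 : ∑ j, (if i = j then (1:ℝ) else 0) * x j = x i := by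
      rw [Finset.sum_eq_single i]
      · simp
      · intro b _ hb
        rw [if_neg (fun h => hb h.symm), zero_mul]
      · intro h; exact absurd (Finset.mem_univ i) h
    rw [h1] at h
    linarith
  set y : Fin m → ℝ := fun i => |x i| with hy_def
  have hy : ∀ i, y i ≤ ∑ j, W i j * y j := by
    intro i
    calc y i = |∑ j, W i j * x j| := by rw [hy_def]; simp only [← hx i]
      _ ≤ ∑ j, |W i j * x j| := Finset.abs_sum_le_sum_abs _ _
      _ = ∑ j, W i j * y j := by
          refine Finset.sum_congr rfl fun j _ => ?_
          rw [abs_mul, abs_of_nonneg (hW i j)]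
  have hT : ∑ i, c i * y i ≤ θ * ∑ i, c i * y i := by
    calc ∑ i, c i * y i ≤ ∑ i, c i * ∑ j, W i j * y j := by
          refine Finset.sum_le_sum fun i _ => ?_
          exact mul_le_mul_of_nonneg_left (hy i) (le_trans zero_le_one (hc1 i))
      _ = ∑ j, (∑ i, c i * W i j) * y j := by
          simp only [Finset.mul_sum, Finset.sum_mul]
          rw [Finset.sum_comm]
          congr 1; ext i; congr 1; ext j; ring
      _ ≤ ∑ j, (θ * c j) * y j := by
          refine Finset.sum_le_sum fun j _ => mul_le_mul_of_nonneg_right (hcol j) (abs_nonneg _)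
      _ = θ * ∑ i, c i * y i := by rw [Finset.mul_sum]; congr 1; ext j; ring
  obtain ⟨i0, hi0⟩ : ∃ i0, x i0 ≠ 0 := by
    by_contra h
    push_neg at h
    exact hx0 (funext h)
  have hT0 : 0 < ∑ i, c i * y i := by
    have h1 : 0 < c i0 * y i0 :=
      mul_pos (lt_of_lt_of_le zero_lt_one (hc1 i0)) (abs_pos.mpr hi0)
    have h2 : c i0 * y i0 ≤ ∑ i, c i * y i := by
      refine Finset.single_le_sum (f := fun i => c i * y i) (fun i' _ => ?_) (Finset.mem_univ i0)
      exact mul_nonneg (le_trans zero_le_one (hc1 i')) (abs_nonneg _)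
    linarith
  nlinarith

/-- `det (1 - W) > 0` for a certified matrix. -/
lemma det_one_sub_pos {W : Matrix (Fin m) (Fin m) ℝ} {c : Fin m → ℝ} {θ : ℝ}
    (hW : ∀ i j, 0 ≤ W i j) (hθ0 : 0 ≤ θ) (hθ1 : θ < 1) (hc1 : ∀ j, 1 ≤ c j)
    (hcol : ∀ j, ∑ i, c i * W i j ≤ θ * c j) :
    0 < (1 - W).det := by
  have hne : ∀ t : ℝ, t ∈ Set.Icc (0:ℝ) 1 → (1 - t • W).det ≠ 0 := by
    intro t ht
    refine det_one_sub_ne_zero (fun i j => ?_) hθ1 hc1 (fun j => ?_)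
    · exact mul_nonneg ht.1 (hW i j)
    · have : ∑ i, c i * (t • W) i j = t * ∑ i, c i * W i j := by
        rw [Finset.mul_sum]
        refine Finset.sum_congr rfl fun i _ => ?_
        simp [Matrix.smul_apply]; ring
      rw [this]
      have h1 : t * ∑ i, c i * W i j ≤ t * (θ * c j) :=
        mul_le_mul_of_nonneg_left (hcol j) ht.1
      have h2 : t * (θ * c j) ≤ 1 * (θ * c j) :=
        mul_le_mul_of_nonneg_right ht.2
          (mul_nonneg hθ0 (le_trans zero_le_one (hc1 j)))
      linarith
  have hcont : Continuous fun t : ℝ => (1 - t • W : Matrix (Fin m) (Fin m) ℝ).det := by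
    exact (continuous_const.sub (continuous_id.smul continuous_const)).matrix_det
  rcases lt_or_ge 0 ((1 - W).det) with h | h
  · exact h
  · exfalso
    have hg0 : (1 - (0:ℝ) • W).det = 1 := by simp
    have hg1 : (1 - (1:ℝ) • W).det ≤ 0 := by simpa using h
    have hsub : Set.Icc ((1 - (1:ℝ) • W).det) ((1 - (0:ℝ) • W).det) ⊆
        (fun t : ℝ => (1 - t • W : Matrix (Fin m) (Fin m) ℝ).det) '' Set.Icc 0 1 :=
      intermediate_value_Icc' zero_le_one hcont.continuousOn
    have h0mem : (0:ℝ) ∈ Set.Icc ((1 - (1:ℝ) • W).det) ((1 - (0:ℝ) • W).det) := by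
      constructor
      · exact hg1
      · rw [hg0]; exact zero_le_one
    obtain ⟨t, ht, hgt⟩ := hsub h0mem
    exact hne t ht hgt

/-- The inverse of `1 - W` has nonnegative entries, with diagonal entries at least `1`. -/
lemma inv_one_sub_nonneg {W : Matrix (Fin m) (Fin m) ℝ} {c : Fin m → ℝ} {θ : ℝ}
    (hW : ∀ i j, 0 ≤ W i j) (hθ0 : 0 ≤ θ) (hθ1 : θ < 1) (hc1 : ∀ j, 1 ≤ c j)
    (hcol : ∀ j, ∑ i, c i * W i j ≤ θ * c j) :
    (∀ i j, 0 ≤ (1 - W)⁻¹ i j) ∧ (∀ j, 1 ≤ (1 - W)⁻¹ j j) := by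
  set B := (1 - W)⁻¹ with hB_def
  have hunit : IsUnit (1 - W).det :=
    isUnit_iff_ne_zero.mpr (det_one_sub_ne_zero hW hθ1 hc1 hcol)
  have h1 : (1 - W) * B = 1 := Matrix.mul_nonsing_inv _ hunit
  have hrec : B = 1 + W * B := by
    have h2 : B - W * B = 1 := by
      have := h1
      rw [sub_mul, one_mul] at this
      exact this
    linear_combination (norm := module) h2
  have hpart : ∀ N, B = (∑ k ∈ Finset.range N, W ^ k) + W ^ N * B := by
    intro N
    induction N with
    | zero => simp
    | succ N ih =>
      calc B = (∑ k ∈ Finset.range N, W ^ k) + W ^ N * B := ih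
        _ = (∑ k ∈ Finset.range N, W ^ k) + W ^ N * (1 + W * B) := by rw [← hrec]
        _ = (∑ k ∈ Finset.range (N + 1), W ^ k) + W ^ (N + 1) * B := by
            rw [Finset.sum_range_succ, mul_add, mul_one, pow_succ, mul_assoc, add_assoc]
  have hBentry : ∀ N i j, B i j = (∑ k ∈ Finset.range N, (W ^ k) i j) + (W ^ N * B) i j := by
    intro N i j
    conv_lhs => rw [hpart N]
    rw [Matrix.add_apply, Matrix.sum_apply]
  have hcorr : ∀ N i j, |(W ^ N * B) i j| ≤ θ ^ N * ∑ k, c k * |B k j| := by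
    intro N i j
    calc |(W ^ N * B) i j| = |∑ k, (W ^ N) i k * B k j| := by rw [Matrix.mul_apply]
      _ ≤ ∑ k, |(W ^ N) i k * B k j| := Finset.abs_sum_le_sum_abs _ _
      _ = ∑ k, (W ^ N) i k * |B k j| := by
          refine Finset.sum_congr rfl fun k _ => ?_
          rw [abs_mul, abs_of_nonneg (pow_entry_nonneg hW N i k)]
      _ ≤ ∑ k, (θ ^ N * c k) * |B k j| := by
          refine Finset.sum_le_sum fun k _ => ?_
          exact mul_le_mul_of_nonneg_right (pow_entry_le hW hθ0 hc1 hcol N i k) (abs_nonneg _)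
      _ = θ ^ N * ∑ k, c k * |B k j| := by rw [Finset.mul_sum]; congr 1; ext k; ring
  have hKnn : ∀ j, 0 ≤ ∑ k, c k * |B k j| := by
    intro j
    exact Finset.sum_nonneg fun k _ =>
      mul_nonneg (le_trans zero_le_one (hc1 k)) (abs_nonneg _)
  have htend : ∀ K : ℝ, Tendsto (fun N : ℕ => θ ^ N * K) atTop (nhds 0) := by
    intro K
    have := (tendsto_pow_atTop_nhds_zero_of_lt_one hθ0 hθ1).mul_const K
    simpa using this
  constructor
  · intro i j
    set K := ∑ k, c k * |B k j| with hK_def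
    have hlow : ∀ N : ℕ, -(θ ^ N * K) ≤ B i j := by
      intro N
      have hP : 0 ≤ ∑ k ∈ Finset.range N, (W ^ k) i j :=
        Finset.sum_nonneg fun k _ => pow_entry_nonneg hW k i j
      have h2 := hcorr N i j
      have h3 : -(θ ^ N * K) ≤ (W ^ N * B) i j := by
        have := neg_abs_le ((W ^ N * B) i j)
        linarith
      rw [hBentry N i j]
      linarith
    have := le_of_tendsto' ((htend K).neg) hlow
    simpa using this
  · intro j
    set K := ∑ k, c k * |B k j| with hK_def
    have hlow : ∀ N : ℕ, 1 - θ ^ (N + 1) * K ≤ B j j := by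
      intro N
      have hP : 1 ≤ ∑ k ∈ Finset.range (N + 1), (W ^ k) j j := by
        have h0 : ((W ^ 0) j j : ℝ) = 1 := by simp
        have := Finset.single_le_sum (f := fun k => (W ^ k) j j)
          (fun k _ => pow_entry_nonneg hW k j j) (Finset.mem_range.mpr (Nat.succ_pos N))
        rw [h0] at this
        exact this
      have h2 := hcorr (N + 1) j j
      have h3 : -(θ ^ (N + 1) * K) ≤ (W ^ (N + 1) * B) j j := by
        have := neg_abs_le ((W ^ (N + 1) * B) j j)
        linarith
      rw [hBentry (N + 1) j j]
      linarith
    have htend2 : Tendsto (fun N : ℕ => 1 - θ ^ (N + 1) * K) atTop (nhds 1) := by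
      have h1 : Tendsto (fun N : ℕ => θ ^ (N + 1) * K) atTop (nhds 0) :=
        (htend K).comp (tendsto_add_atTop_nat 1)
      have := (tendsto_const_nhds (x := (1:ℝ)) (f := atTop)).sub h1
      simpa using this
    have := le_of_tendsto' htend2 hlow
    simpa using this

lemma update_row_eq {W : Matrix (Fin m) (Fin m) ℝ} (v : Fin m) :
    (1 - W).updateRow v (Pi.single v 1) = 1 - W.updateRow v 0 := by
  ext i j
  by_cases h : i = v
  · subst h
    rw [Matrix.updateRow_self, Matrix.sub_apply, Matrix.updateRow_self]
    simp [Pi.single_apply, Matrix.one_apply, eq_comm]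
  · rw [Matrix.updateRow_ne h, Matrix.sub_apply, Matrix.sub_apply, Matrix.updateRow_ne h]

/-- Key lemma: zeroing out a row of `W` can only increase `det (1 - W)`. -/
lemma det_le_det_updateRow {W : Matrix (Fin m) (Fin m) ℝ} {c : Fin m → ℝ} {θ : ℝ}
    (hW : ∀ i j, 0 ≤ W i j) (hθ0 : 0 ≤ θ) (hθ1 : θ < 1) (hc1 : ∀ j, 1 ≤ c j)
    (hcol : ∀ j, ∑ i, c i * W i j ≤ θ * c j) (v : Fin m) :
    (1 - W).det ≤ (1 - W.updateRow v 0).det := by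
  have hdet := det_one_sub_pos hW hθ0 hθ1 hc1 hcol
  have hBnn := (inv_one_sub_nonneg hW hθ0 hθ1 hc1 hcol).1
  set A := (1 - W : Matrix (Fin m) (Fin m) ℝ) with hA_def
  have hadj_nn : ∀ j, 0 ≤ A.adjugate j v := by
    intro j
    have h1 : A⁻¹ = Ring.inverse A.det • A.adjugate := Matrix.inv_def A
    have h2 : A⁻¹ j v = (A.det)⁻¹ * A.adjugate j v := by
      rw [h1, Matrix.smul_apply, Ring.inverse_eq_inv, smul_eq_mul]
    have h3 : A.adjugate j v = A.det * A⁻¹ j v := by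
      rw [h2]
      field_simp
    rw [h3]
    exact mul_nonneg (le_of_lt hdet) (hBnn j v)
  have hexp : A.det = ∑ j, A v j * A.adjugate j v := by
    have := Matrix.mul_adjugate A
    have h2 := congrFun (congrFun this v) v
    rw [Matrix.mul_apply] at h2
    rw [h2, Matrix.smul_apply, Matrix.one_apply_eq, smul_eq_mul, mul_one]
  have hle : A.det ≤ A.adjugate v v := by
    rw [hexp]
    have hsplit := Finset.sum_eq_single_of_mem v (Finset.mem_univ v)
      (f := fun j => A v j * A.adjugate j v)
    calc ∑ j, A v j * A.adjugate j v
        ≤ ∑ j, (if j = v then A.adjugate v v else 0) := by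
          refine Finset.sum_le_sum fun j _ => ?_
          by_cases h : j = v
          · rw [if_pos h, h]
            have hAvv : A v v ≤ 1 := by
              rw [hA_def, Matrix.sub_apply, Matrix.one_apply_eq]
              linarith [hW v v]
            nlinarith [hadj_nn v]
          · rw [if_neg h]
            have hAvj : A v j ≤ 0 := by
              rw [hA_def, Matrix.sub_apply, Matrix.one_apply_ne' h]
              linarith [hW v j]
            exact mul_nonpos_of_nonpos_of_nonneg hAvj (hadj_nn j)
      _ = A.adjugate v v := by rw [Finset.sum_ite_eq' Finset.univ v]; simp
  have hadj_eq : A.adjugate v v = (1 - W.updateRow v 0).det := by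
    rw [Matrix.adjugate_apply, hA_def, update_row_eq]
  rw [← hadj_eq]
  exact hle

/-- `det (1 - W) ≤ 1` for a certified matrix. -/
lemma det_one_sub_le_one {W : Matrix (Fin m) (Fin m) ℝ} {c : Fin m → ℝ} {θ : ℝ}
    (hW : ∀ i j, 0 ≤ W i j) (hθ0 : 0 ≤ θ) (hθ1 : θ < 1) (hc1 : ∀ j, 1 ≤ c j)
    (hcol : ∀ j, ∑ i, c i * W i j ≤ θ * c j) :
    (1 - W).det ≤ 1 := by
  suffices H : ∀ t : ℕ, ∀ W : Matrix (Fin m) (Fin m) ℝ, (∀ i j, 0 ≤ W i j) →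
      (∀ j, ∑ i, c i * W i j ≤ θ * c j) →
      (∀ i : Fin m, t ≤ (i : ℕ) → ∀ j, W i j = 0) → (1 - W).det ≤ 1 by
    refine H m W hW hcol fun i hi j => absurd hi (by omega)
  intro t
  induction t with
  | zero =>
    intro W hW' _ hzero
    have : W = 0 := by
      ext i j
      exact hzero i (Nat.zero_le _) j
    rw [this]
    simp
  | succ t ih =>
    intro W hW' hcol' hzero
    by_cases ht : t < m
    · have ht' : t < m := ht
      have hW'le : ∀ i j, (W.updateRow ⟨t, ht'⟩ 0) i j ≤ W i j := by
        intro i j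
        by_cases h : i = (⟨t, ht'⟩ : Fin m)
        · rw [h, Matrix.updateRow_self]
          exact hW' _ j
        · rw [Matrix.updateRow_ne h]
      have hW'nn : ∀ i j, 0 ≤ (W.updateRow ⟨t, ht'⟩ 0) i j := by
        intro i j
        by_cases h : i = (⟨t, ht'⟩ : Fin m)
        · rw [h, Matrix.updateRow_self]; exact le_refl 0
        · rw [Matrix.updateRow_ne h]; exact hW' i j
      have hcol'' : ∀ j, ∑ i, c i * (W.updateRow ⟨t, ht'⟩ 0) i j ≤ θ * c j := by
        intro j
        refine le_trans (Finset.sum_le_sum fun i _ => ?_) (hcol' j)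
        exact mul_le_mul_of_nonneg_left (hW'le i j) (le_trans zero_le_one (hc1 i))
      have hzero' : ∀ i : Fin m, t ≤ (i : ℕ) → ∀ j, (W.updateRow ⟨t, ht'⟩ 0) i j = 0 := by
        intro i hi j
        by_cases h : i = (⟨t, ht'⟩ : Fin m)
        · rw [h, Matrix.updateRow_self]; rfl
        · rw [Matrix.updateRow_ne h]
          refine hzero i ?_ j
          have hne : (i : ℕ) ≠ t := fun hh => h (Fin.ext hh)
          omega
      calc (1 - W).det ≤ (1 - W.updateRow ⟨t, ht'⟩ 0).det :=
            det_le_det_updateRow hW' hθ0 hθ1 hc1 hcol' ⟨t, ht'⟩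
        _ ≤ 1 := ih (W.updateRow ⟨t, ht'⟩ 0) hW'nn hcol'' hzero'
    · refine ih W hW' hcol' fun i hi j => hzero i (by omega) j

/-- Maximum principle: each column of `(1 - W)⁻¹` is dominated by its diagonal entry. -/
lemma inv_entry_le_diag {W : Matrix (Fin m) (Fin m) ℝ} {c : Fin m → ℝ} {θ : ℝ}
    (hW : ∀ i j, 0 ≤ W i j) (hsub : ∀ i, ∑ j, W i j ≤ 1)
    (hθ0 : 0 ≤ θ) (hθ1 : θ < 1) (hc1 : ∀ j, 1 ≤ c j)
    (hcol : ∀ j, ∑ i, c i * W i j ≤ θ * c j) :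
    ∀ i j, (1 - W)⁻¹ i j ≤ (1 - W)⁻¹ j j := by
  intro i j
  haveI : Nonempty (Fin m) := ⟨j⟩
  obtain ⟨hBnn, hBdiag⟩ := inv_one_sub_nonneg hW hθ0 hθ1 hc1 hcol
  set B := (1 - W)⁻¹ with hB_def
  have hunit : IsUnit (1 - W).det :=
    isUnit_iff_ne_zero.mpr (det_one_sub_ne_zero hW hθ1 hc1 hcol)
  have h1 : (1 - W) * B = 1 := Matrix.mul_nonsing_inv _ hunit
  have h2 : B * (1 - W) = 1 := Matrix.nonsing_inv_mul _ hunit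
  have hrec : B = 1 + W * B := by
    have h3 : B - W * B = 1 := by
      have := h1
      rw [sub_mul, one_mul] at this
      exact this
    linear_combination (norm := module) h3
  have hx : ∀ i', B i' j = (if i' = j then (1:ℝ) else 0) + ∑ k, W i' k * B k j := by
    intro i'
    conv_lhs => rw [hrec]
    rw [Matrix.add_apply, Matrix.mul_apply, Matrix.one_apply]
  obtain ⟨i₀, hi₀⟩ := Finite.exists_max (fun i' => B i' j)
  by_contra hcon
  push_neg at hcon
  have hm : B j j < B i₀ j := lt_of_lt_of_le hcon (hi₀ i)
  have hm1 : (1:ℝ) ≤ B j j := hBdiag j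
  have hkey : ∀ i', B i' j = B i₀ j →
      (∑ k, W i' k = 1 ∧ ∀ k, W i' k ≠ 0 → B k j = B i₀ j) := by
    intro i' hi'
    have hij : i' ≠ j := by
      intro h
      rw [h] at hi'
      linarith
    have heq : B i₀ j = ∑ k, W i' k * B k j := by
      rw [← hi', hx i', if_neg hij, zero_add]
    have hle2 : ∑ k, W i' k * B k j ≤ (∑ k, W i' k) * B i₀ j := by
      rw [Finset.sum_mul]
      exact Finset.sum_le_sum fun k _ => mul_le_mul_of_nonneg_left (hi₀ k) (hW i' k)
    have hrow : ∑ k, W i' k = 1 := by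
      have h5 : B i₀ j ≤ (∑ k, W i' k) * B i₀ j := le_trans (le_of_eq heq) hle2
      nlinarith [hsub i']
    refine ⟨hrow, fun k hk => ?_⟩
    have hz : ∑ k', W i' k' * (B i₀ j - B k' j) = 0 := by
      have hsum : ∑ k', W i' k' * (B i₀ j - B k' j)
          = (∑ k', W i' k') * B i₀ j - ∑ k', W i' k' * B k' j := by
        rw [Finset.sum_mul, ← Finset.sum_sub_distrib]
        refine Finset.sum_congr rfl fun k' _ => ?_
        ring
      rw [hsum, hrow, one_mul, ← heq, sub_self]
    have hterm := (Finset.sum_eq_zero_iff_of_nonneg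
      (fun k' _ => mul_nonneg (hW i' k') (by linarith [hi₀ k']))).mp hz k (Finset.mem_univ k)
    rcases mul_eq_zero.mp hterm with h | h
    · exact absurd h hk
    · linarith [sub_eq_zero.mp h]
  set u : Fin m → ℝ := fun k => if B k j = B i₀ j then (1:ℝ) else 0 with hu_def
  have hvle : ∀ i', ((1 - W) *ᵥ u) i' ≤ 0 := by
    intro i'
    have hexpand : ((1 - W) *ᵥ u) i' = u i' - ∑ k, W i' k * u k := by
      simp only [Matrix.mulVec, dotProduct, Matrix.sub_apply, Matrix.one_apply, sub_mul,
        Finset.sum_sub_distrib]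
      congr 1
      rw [Finset.sum_eq_single i']
      · simp
      · intro b _ hb
        rw [if_neg (fun h => hb h.symm), zero_mul]
      · intro h; exact absurd (Finset.mem_univ i') h
    rw [hexpand]
    by_cases h : B i' j = B i₀ j
    · obtain ⟨hrow, hsupp⟩ := hkey i' h
      have hsum : ∑ k, W i' k * u k = ∑ k, W i' k := by
        refine Finset.sum_congr rfl fun k _ => ?_
        by_cases hk : B k j = B i₀ j
        · rw [hu_def]
          simp only [if_pos hk, mul_one]
        · have hWk : W i' k = 0 := by
            by_contra hWk
            exact hk (hsupp k hWk)
          rw [hWk, zero_mul]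
      have hui' : u i' = 1 := by rw [hu_def]; simp only [if_pos h]
      rw [hsum, hrow, hui']
      linarith
    · have hui' : u i' = 0 := by rw [hu_def]; simp only [if_neg h]
      rw [hui']
      have : 0 ≤ ∑ k, W i' k * u k := by
        refine Finset.sum_nonneg fun k _ => mul_nonneg (hW i' k) ?_
        rw [hu_def]
        by_cases hk : B k j = B i₀ j <;> simp [hk]
      linarith
  have huB : u = B *ᵥ ((1 - W) *ᵥ u) := by
    rw [Matrix.mulVec_mulVec, h2, Matrix.one_mulVec]
  have hcontr : u i₀ ≤ 0 := by
    rw [huB]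
    have : (B *ᵥ ((1 - W) *ᵥ u)) i₀ = ∑ k, B i₀ k * ((1 - W) *ᵥ u) k := by
      rw [Matrix.mulVec, dotProduct]
    rw [this]
    exact Finset.sum_nonpos fun k _ => mul_nonpos_of_nonneg_of_nonpos (hBnn i₀ k) (hvle k)
  have : u i₀ = 1 := by rw [hu_def]; simp
  linarith


end GenDim

section MainDim

variable {n : ℕ}



lemma map_pow_eq (S : Matrix (Fin n) (Fin n) ℝ) (k : ℕ) :
    (S.map (algebraMap ℝ ℂ)) ^ k = (S ^ k).map (algebraMap ℝ ℂ) := by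
  have h1 : S.map (algebraMap ℝ ℂ) = (algebraMap ℝ ℂ).mapMatrix S :=
    (RingHom.mapMatrix_apply _ _).symm
  rw [h1, ← map_pow, RingHom.mapMatrix_apply]

lemma entry_le_norm (A : Matrix (Fin n) (Fin n) ℂ) (i j : Fin n) : ‖A i j‖ ≤ ‖A‖ := by
  have h1 : ‖A i j‖₊ ≤ ‖A‖₊ := by
    rw [Matrix.linfty_opNNNorm_def]
    calc ‖A i j‖₊ ≤ ∑ j', ‖A i j'‖₊ :=
          Finset.single_le_sum (f := fun j' => ‖A i j'‖₊) (fun _ _ => by positivity)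
            (Finset.mem_univ j)
      _ ≤ _ := Finset.le_sup (f := fun i => ∑ j', ‖A i j'‖₊) (Finset.mem_univ i)
  exact_mod_cast h1

/-- From `specRad S < 1` we extract a certificate vector for `S`. -/
lemma exists_cert (hn : 0 < n) (S : Matrix (Fin n) (Fin n) ℝ)
    (hnonneg : ∀ i j, 0 ≤ S i j) (hrad : specRad S < 1) :
    ∃ c : Fin n → ℝ, ∃ θ : ℝ, 0 ≤ θ ∧ θ < 1 ∧ (∀ j, 1 ≤ c j) ∧
      ∀ j, ∑ i, c i * S i j ≤ θ * c j := by
  set Sc := S.map (algebraMap ℝ ℂ) with hSc_def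
  -- the spectrum is bounded by the norm
  have hbdd : BddAbove ((fun z : ℂ => ‖z‖) '' spectrum ℂ Sc) := by
    refine ⟨‖Sc‖ * ‖(1 : Matrix (Fin n) (Fin n) ℂ)‖, ?_⟩
    rintro _ ⟨z, hz, rfl⟩
    have := spectrum.subset_closedBall_norm_mul Sc hz
    rw [Metric.mem_closedBall, dist_zero_right] at this
    show ‖z‖ ≤ _
    exact this
  have hspec_le : ∀ z ∈ spectrum ℂ Sc, ‖z‖ ≤ specRad S := fun z hz =>
    le_csSup hbdd ⟨z, hz, rfl⟩
  have hsr : spectralRadius ℂ Sc < 1 := by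
    have h1 : spectralRadius ℂ Sc ≤ ENNReal.ofReal (specRad S) := by
      have h3 : spectralRadius ℂ Sc = ⨆ z ∈ spectrum ℂ Sc, (‖z‖₊ : ℝ≥0∞) := rfl
      rw [h3]
      refine iSup₂_le fun z hz => ?_
      rw [show ((‖z‖₊ : ℝ≥0∞)) = ENNReal.ofReal ‖z‖ from (ENNReal.ofReal_eq_coe_nnreal (norm_nonneg z)).symm]
      exact ENNReal.ofReal_le_ofReal (hspec_le z hz)
    refine lt_of_le_of_lt h1 ?_
    exact ENNReal.ofReal_lt_one.mpr hrad
  -- Gelfand's formula gives a power with small norm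
  have hg := spectrum.pow_nnnorm_pow_one_div_tendsto_nhds_spectralRadius Sc
  have hev : ∀ᶠ k : ℕ in atTop, (‖Sc ^ k‖₊ : ℝ≥0∞) ^ (1/(k:ℝ)) < 1 :=
    hg.eventually_lt_const hsr
  obtain ⟨k0, hk0, hk0ge⟩ := (hev.and (eventually_ge_atTop 1)).exists
  have hb1 : ‖Sc ^ k0‖ < 1 := by
    by_contra hcon
    push_neg at hcon
    have h1 : (1:ℝ≥0∞) ≤ (‖Sc ^ k0‖₊ : ℝ≥0∞) := by
      exact_mod_cast hcon
    have h2 : (1:ℝ≥0∞) ≤ (‖Sc ^ k0‖₊ : ℝ≥0∞) ^ (1/(k0:ℝ)) := by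
      calc (1:ℝ≥0∞) = 1 ^ (1/(k0:ℝ)) := (ENNReal.one_rpow _).symm
        _ ≤ _ := ENNReal.rpow_le_rpow h1 (by positivity)
    exact absurd hk0 (not_lt.mpr h2)
  set b := ‖Sc ^ k0‖ with hb_def
  have hb0 : 0 ≤ b := norm_nonneg _
  have heps : (0:ℝ) < 1 / (2 * (n:ℝ) + 2) := by positivity
  obtain ⟨m0, hm0⟩ := exists_pow_lt_of_lt_one heps hb1
  have hm0ne : m0 ≠ 0 := by
    intro h
    rw [h, pow_zero] at hm0
    have : (1:ℝ) / (2 * (n:ℝ) + 2) ≤ 1 := by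
      rw [div_le_one (by positivity)]
      have : (0:ℝ) ≤ (n:ℝ) := Nat.cast_nonneg n
      linarith
    linarith
  set K := k0 * m0 with hK_def
  have hKnorm : ‖Sc ^ K‖ ≤ b ^ m0 := by
    rw [hK_def, pow_mul]
    exact norm_pow_le' _ (Nat.pos_of_ne_zero hm0ne)
  have hKpos : 0 < K :=
    Nat.pos_of_ne_zero (Nat.mul_ne_zero (by omega) hm0ne)
  -- entrywise smallness of S ^ K
  have hSK : ∀ i j, (S ^ K) i j ≤ 1 / (2 * (n:ℝ) + 2) := by
    intro i j
    have h1 : ((S ^ K) i j : ℝ) = ‖(Sc ^ K) i j‖ := by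
      rw [hSc_def, map_pow_eq, Matrix.map_apply]
      rw [show (algebraMap ℝ ℂ) ((S ^ K) i j) = ((((S ^ K) i j : ℝ)) : ℂ) from rfl]
      rw [Complex.norm_real, Real.norm_eq_abs,
        abs_of_nonneg (pow_entry_nonneg hnonneg K i j)]
    rw [h1]
    exact le_trans (entry_le_norm _ i j) (le_trans hKnorm (le_of_lt hm0))
  -- the certificate vector
  set c : Fin n → ℝ := fun j => ∑ k ∈ Finset.range K, ∑ i, (S ^ k) i j with hc_def
  have hdnn : ∀ k j, 0 ≤ ∑ i, (S ^ k) i j := fun k j =>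
    Finset.sum_nonneg fun i _ => pow_entry_nonneg hnonneg k i j
  have hc1 : ∀ j, 1 ≤ c j := by
    intro j
    have h0 : ∑ i, ((S ^ 0) i j : ℝ) = 1 := by
      simp [Matrix.one_apply]
    calc (1:ℝ) = ∑ i, (S ^ 0) i j := h0.symm
      _ ≤ ∑ k ∈ Finset.range K, ∑ i, (S ^ k) i j := by
          refine Finset.single_le_sum (f := fun k => ∑ i, (S ^ k) i j)
            (fun k _ => hdnn k j) (Finset.mem_range.mpr hKpos)
  have hcS : ∀ j, ∑ i, c i * S i j = c j - 1 + ∑ i, (S ^ K) i j := by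
    intro j
    have h1 : ∑ i, c i * S i j = ∑ k ∈ Finset.range K, ∑ l, ((S ^ k) * S) l j := by
      rw [hc_def]
      simp only [Finset.sum_mul, Matrix.mul_apply]
      rw [Finset.sum_comm]
      refine Finset.sum_congr rfl fun k _ => ?_
      rw [Finset.sum_comm]
    have h2 : ∀ k : ℕ, ∑ l, ((S ^ k) * S) l j = ∑ i, (S ^ (k+1)) i j := by
      intro k
      refine Finset.sum_congr rfl fun l _ => ?_
      rw [← pow_succ]
    have h3 : ∑ k ∈ Finset.range K, ∑ i, (S ^ (k+1)) i j
        = (∑ k ∈ Finset.range K, ∑ i, (S ^ k) i j) + (∑ i, (S ^ K) i j)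
          - ∑ i, (S ^ 0) i j := by
      have ha := Finset.sum_range_succ' (fun k => ∑ i, ((S ^ k) i j : ℝ)) K
      have hb := Finset.sum_range_succ (fun k => ∑ i, ((S ^ k) i j : ℝ)) K
      linarith
    have h4 : ∑ i, ((S ^ 0) i j : ℝ) = 1 := by simp [Matrix.one_apply]
    rw [h1, Finset.sum_congr rfl (fun k _ => h2 k), h3, h4, hc_def]
    ring
  have hcolhalf : ∀ j, ∑ i, c i * S i j ≤ c j - 1/2 := by
    intro j
    rw [hcS j]
    have h5 : ∑ i, ((S ^ K) i j : ℝ) ≤ (n:ℝ) * (1 / (2 * (n:ℝ) + 2)) := by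
      calc ∑ i, ((S ^ K) i j : ℝ) ≤ ∑ _i : Fin n, 1 / (2 * (n:ℝ) + 2) :=
            Finset.sum_le_sum fun i _ => hSK i j
        _ = (n:ℝ) * (1 / (2 * (n:ℝ) + 2)) := by
            rw [Finset.sum_const, Finset.card_univ, Fintype.card_fin, nsmul_eq_mul]
    have h6 : (n:ℝ) * (1 / (2 * (n:ℝ) + 2)) ≤ 1/2 := by
      rw [mul_div_assoc']
      rw [div_le_div_iff₀ (by positivity) (by norm_num)]
      linarith [Nat.cast_nonneg (α := ℝ) n]
    linarith
  -- build θ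
  set C : ℝ := (∑ j, c j) + 1 with hC_def
  have hC1 : 1 ≤ C := by
    have : 0 ≤ ∑ j, c j := Finset.sum_nonneg fun j _ => le_trans zero_le_one (hc1 j)
    rw [hC_def]; linarith
  have hcC : ∀ j, c j ≤ C := by
    intro j
    have := Finset.single_le_sum (f := c) (fun j' _ => le_trans zero_le_one (hc1 j'))
      (Finset.mem_univ j)
    rw [hC_def]; linarith
  refine ⟨c, 1 - 1/(2*C), ?_, ?_, hc1, ?_⟩
  · have h1 : 1/(2*C) ≤ 1/2 := by
      rw [div_le_div_iff₀ (by linarith) (by norm_num)]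
      linarith
    linarith
  · have h1 : 0 < 1/(2*C) := by positivity
    linarith
  · intro j
    have h1 := hcolhalf j
    have h2 : c j / (2*C) ≤ 1/2 := by
      rw [div_le_div_iff₀ (by linarith) (by norm_num)]
      linarith [hcC j]
    have h3 : (1 - 1/(2*C)) * c j = c j - c j/(2*C) := by ring
    linarith


/-- Spectrum bound from a certificate vector: every complex eigenvalue has modulus at most `θ`. -/
lemma spec_abs_le (S : Matrix (Fin n) (Fin n) ℝ) (hnonneg : ∀ i j, 0 ≤ S i j)
    {c : Fin n → ℝ} {θ : ℝ} (hc1 : ∀ j, 1 ≤ c j)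
    (hcol : ∀ j, ∑ i, c i * S i j ≤ θ * c j) :
    ∀ z ∈ spectrum ℂ (S.map (algebraMap ℝ ℂ)), ‖z‖ ≤ θ := by
  intro z hz
  set Sc := S.map (algebraMap ℝ ℂ) with hSc_def
  have hnu : ¬IsUnit ((algebraMap ℂ (Matrix (Fin n) (Fin n) ℂ)) z - Sc) := spectrum.mem_iff.mp hz
  have hdet : ((algebraMap ℂ (Matrix (Fin n) (Fin n) ℂ)) z - Sc).det = 0 := by
    by_contra h
    exact hnu ((Matrix.isUnit_iff_isUnit_det _).mpr (isUnit_iff_ne_zero.mpr h))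
  obtain ⟨x, hx0, hxv⟩ := (Matrix.exists_mulVec_eq_zero_iff).mpr hdet
  have hxz : ∀ i, z * x i = ∑ j, Sc i j * x j := by
    intro i
    have h := congrFun hxv i
    simp only [Matrix.mulVec, dotProduct, Matrix.sub_apply, Matrix.algebraMap_matrix_apply,
      Algebra.algebraMap_self, RingHom.id_apply, sub_mul, Finset.sum_sub_distrib,
      Pi.zero_apply] at h
    have h1 : ∑ j, (if i = j then z else 0) * x j = z * x i := by
      rw [Finset.sum_eq_single i]
      · simp
      · intro b _ hb
        rw [if_neg (fun h' => hb h'.symm), zero_mul]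
      · intro h'; exact absurd (Finset.mem_univ i) h'
    rw [h1] at h
    exact sub_eq_zero.mp h
  set y : Fin n → ℝ := fun i => ‖x i‖ with hy_def
  have hy0 : ∀ i, 0 ≤ y i := fun i => norm_nonneg _
  have hy : ∀ i, ‖z‖ * y i ≤ ∑ j, S i j * y j := by
    intro i
    calc ‖z‖ * y i = ‖z * x i‖ := (norm_mul z (x i)).symm
      _ = ‖∑ j, Sc i j * x j‖ := by rw [hxz i]
      _ ≤ ∑ j, ‖Sc i j * x j‖ := norm_sum_le _ _
      _ = ∑ j, S i j * y j := by
          refine Finset.sum_congr rfl fun j _ => ?_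
          rw [norm_mul]
          congr 1
          rw [hSc_def, Matrix.map_apply]
          rw [show (algebraMap ℝ ℂ) (S i j) = ((S i j : ℝ) : ℂ) from rfl]
          rw [Complex.norm_real, Real.norm_eq_abs, abs_of_nonneg (hnonneg i j)]
  set T : ℝ := ∑ i, c i * y i with hT_def
  have hT0 : 0 < T := by
    obtain ⟨i0, hi0⟩ : ∃ i0, x i0 ≠ 0 := by
      by_contra h
      push_neg at h
      exact hx0 (funext h)
    have h1 : 0 < c i0 * y i0 :=
      mul_pos (lt_of_lt_of_le zero_lt_one (hc1 i0)) (by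
        rw [hy_def]
        exact norm_pos_iff.mpr hi0)
    have h2 : c i0 * y i0 ≤ T := by
      rw [hT_def]
      refine Finset.single_le_sum (f := fun i => c i * y i) (fun i _ => ?_) (Finset.mem_univ i0)
      exact mul_nonneg (le_trans zero_le_one (hc1 i)) (hy0 i)
    linarith
  have hTle : ‖z‖ * T ≤ θ * T := by
    calc ‖z‖ * T = ∑ i, c i * (‖z‖ * y i) := by
          rw [hT_def, Finset.mul_sum]
          refine Finset.sum_congr rfl fun i _ => ?_
          ring
      _ ≤ ∑ i, c i * ∑ j, S i j * y j := by
          refine Finset.sum_le_sum fun i _ => ?_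
          exact mul_le_mul_of_nonneg_left (hy i) (le_trans zero_le_one (hc1 i))
      _ = ∑ j, (∑ i, c i * S i j) * y j := by
          simp only [Finset.mul_sum, Finset.sum_mul]
          rw [Finset.sum_comm]
          refine Finset.sum_congr rfl fun i _ => ?_
          refine Finset.sum_congr rfl fun j _ => ?_
          ring
      _ ≤ ∑ j, (θ * c j) * y j := by
          refine Finset.sum_le_sum fun j _ => mul_le_mul_of_nonneg_right (hcol j) (hy0 j)
      _ = θ * T := by
          rw [hT_def, Finset.mul_sum]
          refine Finset.sum_congr rfl fun j _ => ?_
          ring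
  exact le_of_mul_le_mul_right hTle hT0

end MainDim

end Stmt12Aux

/-- For a substochastic matrix `S` of order `n` with `λ(S) < 1`,
`1/(n·(1 − λ(S))) ≤ max_v (I − S)⁻¹(v,v) ≤ 1/det(I − S)`. -/
theorem stmt12 {n : ℕ} (S : Matrix (Fin n) (Fin n) ℝ)
    (hnonneg : ∀ i j, 0 ≤ S i j) (hsub : ∀ i, ∑ j, S i j ≤ 1)
    (hrad : specRad S < 1) :
    1 / ((n : ℝ) * (1 - specRad S)) ≤ (⨆ v : Fin n, (1 - S)⁻¹ v v) ∧
      (⨆ v : Fin n, (1 - S)⁻¹ v v) ≤ 1 / (1 - S).det := by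
  rcases Nat.eq_zero_or_pos n with hn | hn
  · subst hn
    constructor
    · simp
    · rw [Real.iSup_of_isEmpty, Matrix.det_isEmpty]
      norm_num
  · haveI : Nonempty (Fin n) := ⟨⟨0, hn⟩⟩
    obtain ⟨c₀, θ₀, hθ₀0, hθ₀1, hc₀1, hcol₀⟩ := Stmt12Aux.exists_cert hn S hnonneg hrad
    have hdetpos : 0 < (1 - S).det :=
      Stmt12Aux.det_one_sub_pos hnonneg hθ₀0 hθ₀1 hc₀1 hcol₀
    obtain ⟨hBnn, hBdiag⟩ := Stmt12Aux.inv_one_sub_nonneg hnonneg hθ₀0 hθ₀1 hc₀1 hcol₀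
    have hBle : ∀ i j, (1 - S)⁻¹ i j ≤ (1 - S)⁻¹ j j :=
      Stmt12Aux.inv_entry_le_diag hnonneg hsub hθ₀0 hθ₀1 hc₀1 hcol₀
    set B := (1 - S)⁻¹ with hB_def
    have hbddB : BddAbove (Set.range fun v => B v v) := (Set.finite_range _).bddAbove
    set M := ⨆ v, B v v with hM_def
    have hMle : ∀ v, B v v ≤ M := fun v => le_ciSup hbddB v
    have hM1 : (1:ℝ) ≤ M := le_trans (hBdiag ⟨0, hn⟩) (hMle _)
    have hn1 : (1:ℝ) ≤ (n:ℝ) := by exact_mod_cast hn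
    have hnM1 : (1:ℝ) ≤ (n:ℝ) * M := by nlinarith
    have hnM0 : (0:ℝ) < (n:ℝ) * M := by linarith
    constructor
    · -- lower bound
      set c : Fin n → ℝ := fun j => ∑ i, B i j with hc_def
      have hc1 : ∀ j, 1 ≤ c j := by
        intro j
        rw [hc_def]
        calc (1:ℝ) ≤ B j j := hBdiag j
          _ ≤ ∑ i, B i j :=
            Finset.single_le_sum (f := fun i => B i j) (fun i _ => hBnn i j)
              (Finset.mem_univ j)
      have hcnM : ∀ j, c j ≤ (n:ℝ) * M := by
        intro j
        rw [hc_def]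
        calc ∑ i, B i j ≤ ∑ _i : Fin n, M :=
              Finset.sum_le_sum fun i _ => le_trans (hBle i j) (hMle j)
          _ = (n:ℝ) * M := by
              rw [Finset.sum_const, Finset.card_univ, Fintype.card_fin, nsmul_eq_mul]
      have hunit : IsUnit (1 - S).det := isUnit_iff_ne_zero.mpr hdetpos.ne'
      have h2 : B * (1 - S) = 1 := Matrix.nonsing_inv_mul _ hunit
      have hkey : ∀ j, ∑ k, c k * S k j = c j - 1 := by
        intro j
        have h5 : ∀ i, (B * (1 - S)) i j = B i j - ∑ k, B i k * S k j := by
          intro i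
          rw [Matrix.mul_apply]
          have h6 : ∀ k, B i k * (1 - S) k j
              = B i k * (1 : Matrix (Fin n) (Fin n) ℝ) k j - B i k * S k j := fun k => by
            rw [Matrix.sub_apply, mul_sub]
          rw [Finset.sum_congr rfl fun k _ => h6 k, Finset.sum_sub_distrib]
          congr 1
          simp [Matrix.one_apply, mul_ite, mul_one, mul_zero]
        have h7 : (1:ℝ) = ∑ i, (B * (1 - S)) i j := by
          rw [h2]
          simp [Matrix.one_apply]
        rw [Finset.sum_congr rfl fun i (_ : i ∈ Finset.univ) => h5 i] at h7
        rw [Finset.sum_sub_distrib] at h7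
        have h8 : ∑ i, ∑ k, B i k * S k j = ∑ k, c k * S k j := by
          rw [Finset.sum_comm]
          refine Finset.sum_congr rfl fun k _ => ?_
          rw [hc_def, Finset.sum_mul]
        rw [h8] at h7
        have h9 : ∑ i, B i j = c j := by rw [hc_def]
        rw [h9] at h7
        linarith
      set θ : ℝ := 1 - 1/((n:ℝ) * M) with hθ_def
      have hθ0 : 0 ≤ θ := by
        rw [hθ_def]
        have : 1/((n:ℝ)*M) ≤ 1 := by
          rw [div_le_one hnM0]
          exact hnM1
        linarith
      have hθcol : ∀ j, ∑ i, c i * S i j ≤ θ * c j := by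
        intro j
        rw [hkey j, hθ_def]
        have h10 : c j / ((n:ℝ)*M) ≤ 1 := by
          rw [div_le_one hnM0]
          exact hcnM j
        have h11 : (1 - 1/((n:ℝ)*M)) * c j = c j - c j/((n:ℝ)*M) := by ring
        rw [h11]
        linarith
      have hspec := Stmt12Aux.spec_abs_le S hnonneg hc1 hθcol
      have hρ : specRad S ≤ θ := by
        rw [specRad]
        refine Real.sSup_le ?_ hθ0
        rintro _ ⟨z, hz, rfl⟩
        exact hspec z hz
      have h1ρ : 1/((n:ℝ)*M) ≤ 1 - specRad S := by
        rw [hθ_def] at hρ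
        linarith
      have hpos : 0 < (n:ℝ) * (1 - specRad S) := by
        have h14 : 0 < 1/((n:ℝ)*M) := by positivity
        have h15 : 0 < 1 - specRad S := lt_of_lt_of_le h14 h1ρ
        positivity
      rw [div_le_iff₀ hpos]
      -- 1 ≤ M * (n * (1 - specRad S))
      have h16 : (n:ℝ) * (1 - specRad S) ≥ (n:ℝ) * (1/((n:ℝ)*M)) :=
        mul_le_mul_of_nonneg_left h1ρ (by positivity)
      have h17 : (n:ℝ) * (1/((n:ℝ)*M)) = 1/M := by
        field_simp
      have h18 : M * (1/M) ≤ M * ((n:ℝ) * (1 - specRad S)) :=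
        mul_le_mul_of_nonneg_left (h17 ▸ h16) (by linarith)
      have h19 : M * (1/M) = 1 := by
        field_simp
      linarith
    · -- upper bound
      refine ciSup_le fun v => ?_
      have hBvv : B v v = ((1 - S).det)⁻¹ * (1 - S).adjugate v v := by
        rw [hB_def, Matrix.inv_def, Matrix.smul_apply, Ring.inverse_eq_inv, smul_eq_mul]
      have hadj : (1 - S).adjugate v v = (1 - S.updateRow v 0).det := by
        rw [Matrix.adjugate_apply, Stmt12Aux.update_row_eq]
      have hW'le : ∀ i j, (S.updateRow v 0) i j ≤ S i j := by
        intro i j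
        by_cases h : i = v
        · rw [h, Matrix.updateRow_self]
          exact hnonneg _ j
        · rw [Matrix.updateRow_ne h]
      have hW'nn : ∀ i j, 0 ≤ (S.updateRow v 0) i j := by
        intro i j
        by_cases h : i = v
        · rw [h, Matrix.updateRow_self]; exact le_refl 0
        · rw [Matrix.updateRow_ne h]; exact hnonneg i j
      have hcol' : ∀ j, ∑ i, c₀ i * (S.updateRow v 0) i j ≤ θ₀ * c₀ j := by
        intro j
        refine le_trans (Finset.sum_le_sum fun i _ => ?_) (hcol₀ j)
        exact mul_le_mul_of_nonneg_left (hW'le i j) (le_trans zero_le_one (hc₀1 i))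
      have hdetle : (1 - S.updateRow v 0).det ≤ 1 :=
        Stmt12Aux.det_one_sub_le_one hW'nn hθ₀0 hθ₀1 hc₀1 hcol'
      rw [hBvv, hadj, one_div]
      have hinv0 : 0 ≤ ((1 - S).det)⁻¹ := inv_nonneg.mpr hdetpos.le
      calc ((1 - S).det)⁻¹ * (1 - S.updateRow v 0).det
          ≤ ((1 - S).det)⁻¹ * 1 := mul_le_mul_of_nonneg_left hdetle hinv0
        _ = ((1 - S).det)⁻¹ := mul_one _
end

section
/- Let S be a nonnegative real n×n matrix with spectral radius strictly less than 1, and let W be a cycle transversal of the digraph of S. Then 1 / det(I − S) ≤ ∏_{w∈W} (I − S)^{−1}(w,w). -/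
open scoped Classical ENNReal

variable {V : Type*}

open Filter Matrix in
lemma lemA {n : ℕ} [Nonempty (Fin n)] (S : Matrix (Fin n) (Fin n) ℝ) (hrad : specRad S < 1) :
    ∀ i j, Tendsto (fun N => (S ^ N) i j) atTop (nhds (0:ℝ)) := by
  letI : NormedRing (Matrix (Fin n) (Fin n) ℂ) := Matrix.linftyOpNormedRing
  letI : NormedAlgebra ℂ (Matrix (Fin n) (Fin n) ℂ) := Matrix.linftyOpNormedAlgebra
  haveI : NormOneClass (Matrix (Fin n) (Fin n) ℂ) := Matrix.linfty_opNormOneClass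
  haveI : CompleteSpace (Matrix (Fin n) (Fin n) ℂ) := FiniteDimensional.complete ℂ _
  set A := S.map (algebraMap ℝ ℂ) with hAdef
  have hb : ∀ z ∈ spectrum ℂ A, ‖z‖ ≤ specRad S := by
    intro z hz
    exact le_csSup ((A.finite_spectrum.image _).bddAbove) ⟨z, hz, rfl⟩
  have h1 : spectralRadius ℂ A < 1 := by
    have hle : spectralRadius ℂ A ≤ ENNReal.ofReal (specRad S) := by
      apply iSup₂_le
      intro z hz
      rw [← ENNReal.ofReal_coe_nnreal, coe_nnnorm]
      exact ENNReal.ofReal_le_ofReal (hb z hz)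
    exact lt_of_le_of_lt hle (ENNReal.ofReal_lt_one.mpr hrad)
  obtain ⟨c, hc1, hc2⟩ := ENNReal.lt_iff_exists_nnreal_btwn.mp h1
  have hc2' : (c : ℝ) < 1 := by exact_mod_cast hc2
  have hev : ∀ᶠ N : ℕ in atTop, (‖A ^ N‖₊ : ENNReal) ^ (1 / (N:ℝ)) < (c : ENNReal) :=
    (spectrum.pow_nnnorm_pow_one_div_tendsto_nhds_spectralRadius A).eventually_lt_const hc1
  have hev2 : ∀ᶠ N in atTop, ‖A ^ N‖ ≤ (c : ℝ) ^ N := by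
    filter_upwards [hev, eventually_gt_atTop 0] with N h hN
    have hN' : (N : ℝ) ≠ 0 := Nat.cast_ne_zero.mpr hN.ne'
    have h2 : ((‖A ^ N‖₊ : ENNReal) ^ (1 / (N:ℝ))) ^ (N : ℝ) < (c : ENNReal) ^ (N : ℝ) :=
      ENNReal.rpow_lt_rpow h (by positivity)
    rw [← ENNReal.rpow_mul, one_div, inv_mul_cancel₀ hN', ENNReal.rpow_one] at h2
    have h3 : (‖A ^ N‖₊ : ENNReal) < ((c ^ (N:ℝ) : NNReal) : ENNReal) := by
      rwa [ENNReal.coe_rpow_of_nonneg _ (by positivity)]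
    have h4 : ‖A ^ N‖₊ ≤ c ^ (N : ℝ) := (ENNReal.coe_lt_coe.mp h3).le
    calc ‖A ^ N‖ = ((‖A ^ N‖₊ : NNReal) : ℝ) := rfl
      _ ≤ ((c ^ (N:ℝ) : NNReal) : ℝ) := by exact_mod_cast h4
      _ = (c : ℝ) ^ (N : ℝ) := by
          rw [NNReal.coe_rpow]
      _ = (c : ℝ) ^ N := by rw [Real.rpow_natCast]
  have hnorm0 : Tendsto (fun N => ‖A ^ N‖) atTop (nhds 0) :=
    squeeze_zero' (Eventually.of_forall fun N => norm_nonneg _) hev2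
      (tendsto_pow_atTop_nhds_zero_of_lt_one c.2 hc2')
  have entry_le : ∀ (M : Matrix (Fin n) (Fin n) ℂ) i j, ‖M i j‖ ≤ ‖M‖ := by
    intro M i j
    have h5 : ‖M i j‖₊ ≤ ‖M‖₊ := by
      rw [Matrix.linfty_opNNNorm_def]
      exact le_trans (Finset.single_le_sum (f := fun k => ‖M i k‖₊) (by simp)
        (Finset.mem_univ j)) (Finset.le_sup (f := fun i => ∑ j, ‖M i j‖₊) (Finset.mem_univ i))
    exact_mod_cast h5
  intro i j
  rw [tendsto_zero_iff_abs_tendsto_zero]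
  apply squeeze_zero (fun N => abs_nonneg _) _ hnorm0
  intro N
  have hmap : A ^ N = (S ^ N).map (algebraMap ℝ ℂ) := by
    rw [hAdef]
    have := map_pow ((algebraMap ℝ ℂ).mapMatrix) S N
    simpa [RingHom.mapMatrix_apply] using this.symm
  calc |(S ^ N) i j| = ‖(algebraMap ℝ ℂ ((S ^ N) i j))‖ := by
        simp [Complex.norm_real]
    _ = ‖(A ^ N) i j‖ := by rw [hmap]; rfl
    _ ≤ ‖A ^ N‖ := entry_le _ i j


open Filter Matrix
section Aux
variable {n : ℕ}

lemma pow_entry_nonneg_le {S T : Matrix (Fin n) (Fin n) ℝ}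
    (hT0 : ∀ i j, 0 ≤ T i j) (hTS : ∀ i j, T i j ≤ S i j) :
    ∀ N i j, 0 ≤ (T ^ N) i j ∧ (T ^ N) i j ≤ (S ^ N) i j := by
  intro N
  induction N with
  | zero =>
      intro i j
      simp only [pow_zero, Matrix.one_apply]
      split <;> simp
  | succ N ih =>
      intro i j
      rw [pow_succ, pow_succ, Matrix.mul_apply, Matrix.mul_apply]
      constructor
      · exact Finset.sum_nonneg fun k _ => mul_nonneg (ih i k).1 (hT0 k j)
      · exact Finset.sum_le_sum fun k _ => mul_le_mul (ih i k).2 (hTS k j) (hT0 k j)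
          (le_trans (ih i k).1 (ih i k).2)

lemma exists_dicycle {D : Fin n → Fin n → Prop} (f : Equiv.Perm (Fin n)) {i : Fin n}
    (hi : f i ≠ i) (harc : ∀ x, f x ≠ x → D x (f x)) : Nonempty (DiCycle D) := by
  set g : Fin n → Fin n := ⇑f with hg
  have hper : i ∈ Function.periodicPts g := by
    refine ⟨orderOf f, orderOf_pos f, ?_⟩
    show g^[orderOf f] i = i
    rw [hg, ← Equiv.Perm.coe_pow, pow_orderOf_eq_one]
    rfl
  set m := Function.minimalPeriod g i with hm
  have hmpos : 0 < m := Function.minimalPeriod_pos_of_mem_periodicPts hper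
  have hit : g^[m] i = i := Function.iterate_minimalPeriod
  have hnonfix : ∀ k, k < m → g (g^[k] i) ≠ g^[k] i := by
    intro k hk hfix
    have hfix' : Function.IsFixedPt g (g^[k] i) := hfix
    have : g^[m - k] (g^[k] i) = g^[k] i := hfix'.iterate (m - k)
    rw [← Function.iterate_add_apply, Nat.sub_add_cancel hk.le, hit] at this
    exact hi (by rw [hg] at this; rw [← this] at hfix; exact (this ▸ hfix))
  have hm2 : 2 ≤ m := by
    rcases Nat.lt_or_ge m 2 with h | h
    · have hm1 : m = 1 := by omega
      rw [hm1] at hit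
      simp at hit
      exact absurd hit hi
    · exact h
  haveI : NeZero m := ⟨hmpos.ne'⟩
  refine ⟨⟨m, hmpos, fun j => g^[j.val] i, ?_, ?_⟩⟩
  · intro a b hab
    have := Function.iterate_injOn_Iio_minimalPeriod (f := g) (x := i)
      (Set.mem_Iio.mpr (ZMod.val_lt a)) (Set.mem_Iio.mpr (ZMod.val_lt b)) hab
    exact ZMod.val_injective m this
  · intro j
    have hval : (j + 1).val = (j.val + 1) % m := by
      rw [ZMod.val_add, ZMod.val_one_eq_one_mod]
      congr 1
      rw [Nat.mod_eq_of_lt (lt_of_lt_of_le one_lt_two hm2)]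
    have hstep : g^[(j + 1).val] i = g (g^[j.val] i) := by
      rw [hval, Function.iterate_mod_minimalPeriod_eq, Function.iterate_succ_apply']
    show D (g^[j.val] i) (g^[(j + 1).val] i)
    rw [hstep]
    exact harc _ (hnonfix j.val (ZMod.val_lt j))

lemma det_one_sub_eq_one {S : Matrix (Fin n) (Fin n) ℝ} (h0 : ∀ i j, 0 ≤ S i j)
    (hnc : IsEmpty (DiCycle fun v w : Fin n => 0 < S v w)) : (1 - S).det = 1 := by
  have hdiag : ∀ i, S i i = 0 := by
    intro i
    by_contra h
    have hpos : 0 < S i i := lt_of_le_of_ne (h0 i i) (Ne.symm h)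
    exact hnc.false ⟨1, one_pos, fun _ => i, fun a b _ => Subsingleton.elim a b,
      fun _ => hpos⟩
  rw [Matrix.det_apply]
  rw [Finset.sum_eq_single (1 : Equiv.Perm (Fin n))]
  · simp [Matrix.one_apply, hdiag]
  · intro σ _ hσ
    have hterm : ∃ x, (1 - S) (σ x) x = 0 := by
      by_contra hall
      push_neg at hall
      obtain ⟨i₀, hi₀⟩ : ∃ x, σ x ≠ x := by
        by_contra hid
        push_neg at hid
        exact hσ (Equiv.ext hid)
      have hfi : σ⁻¹ i₀ ≠ i₀ := by
        intro h
        apply hi₀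
        conv_lhs => rw [← h]
        simp
      refine hnc.false (Classical.choice (exists_dicycle (σ⁻¹) hfi ?_))
      intro x hx
      have hxx : σ (σ⁻¹ x) = x := by simp
      have hne : σ (σ⁻¹ x) ≠ σ⁻¹ x := by rw [hxx]; exact fun h => hx (by rw [← h])
      have := hall (σ⁻¹ x)
      rw [Matrix.sub_apply, Matrix.one_apply_ne (by rw [hxx] at hne ⊢; exact hne)] at this
      have h5 : S (σ (σ⁻¹ x)) (σ⁻¹ x) ≠ 0 := by simpa using this
      rw [hxx] at h5
      exact lt_of_le_of_ne (h0 _ _) (Ne.symm h5)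
    obtain ⟨x, hx⟩ := hterm
    have : ∏ y : Fin n, (1 - S) (σ y) y = 0 :=
      Finset.prod_eq_zero (Finset.mem_univ x) hx
    rw [this, smul_zero]
  · simp

end Aux

section Aux2
variable {n : ℕ}

lemma neumann {S : Matrix (Fin n) (Fin n) ℝ}
    (hpow : ∀ i j, Tendsto (fun N => (S ^ N) i j) atTop (nhds 0)) :
    (1 - S).det ≠ 0 ∧
      ∀ i j, Tendsto (fun N => (∑ p ∈ Finset.range N, S ^ p) i j) atTop
        (nhds ((1 - S)⁻¹ i j)) := by
  have hgeom : ∀ N : ℕ, (∑ p ∈ Finset.range N, S ^ p) * (1 - S) = 1 - S ^ N := by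
    intro N
    have := geom_sum_mul S N
    calc (∑ p ∈ Finset.range N, S ^ p) * (1 - S)
        = -((∑ p ∈ Finset.range N, S ^ p) * (S - 1)) := by noncomm_ring
      _ = -(S ^ N - 1) := by rw [this]
      _ = 1 - S ^ N := neg_sub _ _
  have hmt : Tendsto (fun N => (1 - S ^ N : Matrix (Fin n) (Fin n) ℝ)) atTop
      (nhds (1 : Matrix (Fin n) (Fin n) ℝ)) := by
    apply tendsto_pi_nhds.mpr
    intro i
    rw [tendsto_pi_nhds]
    intro j
    have : Tendsto (fun N => (1 : Matrix (Fin n) (Fin n) ℝ) i j - (S ^ N) i j) atTop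
        (nhds ((1 : Matrix (Fin n) (Fin n) ℝ) i j - 0)) :=
      tendsto_const_nhds.sub (hpow i j)
    simpa using this
  have hdet_t : Tendsto (fun N => (1 - S ^ N : Matrix (Fin n) (Fin n) ℝ).det) atTop
      (nhds 1) := by
    have hcont : Continuous fun M : Matrix (Fin n) (Fin n) ℝ => M.det :=
      Continuous.matrix_det continuous_id
    have := (hcont.tendsto _).comp hmt
    simpa [Function.comp_def] using this
  have hdet : (1 - S).det ≠ 0 := by
    intro h
    have hz : ∀ N, (1 - S ^ N : Matrix (Fin n) (Fin n) ℝ).det = 0 := by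
      intro N
      rw [← hgeom N, Matrix.det_mul, h, mul_zero]
    rw [funext hz] at hdet_t
    exact zero_ne_one (tendsto_nhds_unique tendsto_const_nhds hdet_t)
  refine ⟨hdet, ?_⟩
  have hPN : ∀ N, (∑ p ∈ Finset.range N, S ^ p) = (1 - S ^ N) * (1 - S)⁻¹ := by
    intro N
    rw [← hgeom N, Matrix.mul_assoc, Matrix.mul_nonsing_inv _ (isUnit_iff_ne_zero.mpr hdet),
      Matrix.mul_one]
  intro i j
  have : Tendsto (fun N : ℕ => ((1 - S ^ N) * (1 - S)⁻¹) i j) atTop (nhds ((1 - S)⁻¹ i j)) := by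
    have h1 : Tendsto (fun N : ℕ => ∑ k, ((1 - S ^ N : Matrix (Fin n) (Fin n) ℝ)) i k * (1 - S)⁻¹ k j) atTop
        (nhds (∑ k, (1 : Matrix (Fin n) (Fin n) ℝ) i k * (1 - S)⁻¹ k j)) := by
      apply tendsto_finset_sum
      intro k _
      apply Tendsto.mul_const
      have : Tendsto (fun N => (1 : Matrix (Fin n) (Fin n) ℝ) i k - (S ^ N) i k) atTop
          (nhds ((1 : Matrix (Fin n) (Fin n) ℝ) i k - 0)) := tendsto_const_nhds.sub (hpow i k)
      simpa using this
    have h2 : (∑ k, (1 : Matrix (Fin n) (Fin n) ℝ) i k * (1 - S)⁻¹ k j) = (1 - S)⁻¹ i j := by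
      rw [← Matrix.mul_apply, Matrix.one_mul]
    rw [h2] at h1
    simpa [Matrix.mul_apply] using h1
  simpa [hPN] using this

lemma det_pos {S : Matrix (Fin n) (Fin n) ℝ} (h0 : ∀ i j, 0 ≤ S i j)
    (hpow : ∀ i j, Tendsto (fun N => (S ^ N) i j) atTop (nhds 0)) : 0 < (1 - S).det := by
  have hne : ∀ t ∈ Set.Icc (0:ℝ) 1, (1 - t • S).det ≠ 0 := by
    rintro t ⟨ht0, ht1⟩
    have h0' : ∀ i j, 0 ≤ (t • S) i j := fun i j => by
      simpa using mul_nonneg ht0 (h0 i j)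
    have hle : ∀ i j, (t • S) i j ≤ S i j := fun i j => by
      simpa using mul_le_of_le_one_left (h0 i j) ht1
    have hpow' : ∀ i j, Tendsto (fun N => ((t • S) ^ N) i j) atTop (nhds 0) := by
      intro i j
      have hb := pow_entry_nonneg_le h0' hle
      exact squeeze_zero (fun N => (hb N i j).1) (fun N => (hb N i j).2) (hpow i j)
    exact (neumann hpow').1
  have hcont : Continuous fun t : ℝ => (1 - t • S).det :=
    Continuous.matrix_det (continuous_const.sub (continuous_id.smul continuous_const))
  by_contra h
  push_neg at h
  have hne1 : (1 - S).det ≠ 0 := by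
    have := hne 1 ⟨zero_le_one, le_refl 1⟩
    rwa [one_smul] at this
  have hlt : (1 - S).det < 0 := lt_of_le_of_ne h hne1
  have hmem : (0:ℝ) ∈ Set.Icc ((1 - (1:ℝ) • S).det) ((1 - (0:ℝ) • S).det) := by
    constructor
    · simpa using hlt.le
    · simp
  have := intermediate_value_Icc' zero_le_one (hcont.continuousOn) hmem
  obtain ⟨t, ht, hdet0⟩ := this
  exact hne t ht hdet0

def zeroRC (w : Fin n) (S : Matrix (Fin n) (Fin n) ℝ) : Matrix (Fin n) (Fin n) ℝ :=
  Matrix.of fun i j => if i = w ∨ j = w then 0 else S i j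

lemma det_one_sub_zeroRC (w : Fin n) (S : Matrix (Fin n) (Fin n) ℝ) :
    (1 - zeroRC w S).det = (1 - S).adjugate w w := by
  classical
  set A := (1 - S : Matrix (Fin n) (Fin n) ℝ) with hA
  set C := A.updateRow w (Pi.single w 1) with hC
  have hform : (1 - zeroRC w S) = C.updateCol w (Pi.single w 1) := by
    ext i j
    have base := fun (hi : Prop) => hi
    by_cases hi : i = w <;> by_cases hj : j = w
    · simp [hC, hA, Matrix.updateCol_apply, Matrix.updateRow_apply, hi, hj, zeroRC,
        Matrix.one_apply, Pi.single_apply, Matrix.sub_apply]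
    · have hj' : w ≠ j := fun h => hj h.symm
      simp [hC, hA, Matrix.updateCol_apply, Matrix.updateRow_apply, hi, hj, hj', zeroRC,
        Matrix.one_apply, Pi.single_apply, Matrix.sub_apply]
    · have hi' : w ≠ i := fun h => hi h.symm
      simp [hC, hA, Matrix.updateCol_apply, Matrix.updateRow_apply, hi, hj, hi', zeroRC,
        Matrix.one_apply, Pi.single_apply, Matrix.sub_apply]
    · have hi' : w ≠ i := fun h => hi h.symm
      have hj' : w ≠ j := fun h => hj h.symm
      simp [hC, hA, Matrix.updateCol_apply, Matrix.updateRow_apply, hi, hj, hi', hj', zeroRC,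
        Matrix.one_apply, Pi.single_apply, Matrix.sub_apply]
  rw [hform, Matrix.adjugate_apply, ← hC]
  have hvec : (fun i => C i w) = Pi.single w 1 + fun i => if i = w then 0 else A i w := by
    funext i
    by_cases hi : i = w
    · subst hi
      simp [hC, Matrix.updateRow_apply]
    · simp [hC, Matrix.updateRow_apply, hi, Pi.single_apply]
  have hzero : (C.updateCol w fun i => if i = w then 0 else A i w).det = 0 := by
    apply Matrix.det_eq_zero_of_row_eq_zero w
    intro j
    by_cases hj : j = w
    · subst hj
      simp [Matrix.updateCol_apply]
    · simp [Matrix.updateCol_apply, hj, hC, Matrix.updateRow_apply, Pi.single_apply,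
        Ne.symm hj]
  calc (C.updateCol w (Pi.single w 1)).det
      = (C.updateCol w (Pi.single w 1)).det +
        (C.updateCol w fun i => if i = w then 0 else A i w).det := by rw [hzero, add_zero]
    _ = (C.updateCol w ((Pi.single w 1) + fun i => if i = w then 0 else A i w)).det := by
        rw [Matrix.det_updateCol_add]
    _ = (C.updateCol w fun i => C i w).det := by rw [← hvec]
    _ = C.det := by rw [Matrix.updateCol_eq_self]

end Aux2

section Key
variable {n : ℕ}

lemma key (W : Finset (Fin n)) :
    ∀ S : Matrix (Fin n) (Fin n) ℝ,
    (∀ i j, 0 ≤ S i j) →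
    (∀ i j, Tendsto (fun N => (S ^ N) i j) atTop (nhds 0)) →
    IsCycleTransversal (fun v w : Fin n => 0 < S v w) ↑W →
    1 / (1 - S).det ≤ ∏ w ∈ W, (1 - S)⁻¹ w w := by
  induction W using Finset.induction_on with
  | empty =>
      intro S h0 hpow hT
      have hnc : IsEmpty (DiCycle fun v w : Fin n => 0 < S v w) := by
        constructor
        intro γ
        obtain ⟨i, hi⟩ := hT γ
        simp at hi
      rw [det_one_sub_eq_one h0 hnc]
      simp
  | @insert w W' hw ih =>
      intro S h0 hpow hT
      set S' := zeroRC w S with hS'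
      have h0' : ∀ i j, 0 ≤ S' i j := by
        intro i j
        rw [hS']
        unfold zeroRC
        dsimp
        split
        · exact le_refl 0
        · exact h0 i j
      have hle' : ∀ i j, S' i j ≤ S i j := by
        intro i j
        rw [hS']
        unfold zeroRC
        dsimp
        split
        · exact h0 i j
        · exact le_refl _
      have hcmp := pow_entry_nonneg_le h0' hle'
      have hpow' : ∀ i j, Tendsto (fun N => (S' ^ N) i j) atTop (nhds 0) := fun i j =>
        squeeze_zero (fun N => (hcmp N i j).1) (fun N => (hcmp N i j).2) (hpow i j)
      have hT' : IsCycleTransversal (fun v u : Fin n => 0 < S' v u) ↑W' := by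
        intro γ
        have harc : ∀ i, 0 < S (γ.vtx i) (γ.vtx (i + 1)) := fun i =>
          lt_of_lt_of_le (γ.arc i) (hle' _ _)
        obtain ⟨i, hi⟩ := hT ⟨γ.n, γ.pos, γ.vtx, γ.inj, harc⟩
        refine ⟨i, ?_⟩
        have hvw : γ.vtx i ≠ w := by
          intro h
          have h2 := γ.arc i
          rw [h] at h2
          have h3 : S' w (γ.vtx (i + 1)) = 0 := by
            show zeroRC w S w _ = 0
            unfold zeroRC
            simp
          rw [h3] at h2
          exact lt_irrefl 0 h2
        simp only [Finset.coe_insert, Set.mem_insert_iff] at hi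
        rcases hi with h | h
        · exact absurd h hvw
        · exact h
      have hIH := ih S' h0' hpow' hT'
      obtain ⟨hdet, hlim⟩ := neumann hpow
      obtain ⟨hdet', hlim'⟩ := neumann hpow'
      have hdpos : 0 < (1 - S).det := det_pos h0 hpow
      have hdpos' : 0 < (1 - S').det := det_pos h0' hpow'
      have hsum0 : ∀ (T : Matrix (Fin n) (Fin n) ℝ), (∀ i j, 0 ≤ T i j) →
          ∀ (N : ℕ) i j, 0 ≤ (∑ p ∈ Finset.range N, T ^ p) i j := by
        intro T hT0 N i j
        simp only [Matrix.sum_apply]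
        exact Finset.sum_nonneg fun p _ => (pow_entry_nonneg_le hT0 (fun i j => le_refl _) p i j).1
      have hinv0 : ∀ i j, 0 ≤ (1 - S)⁻¹ i j := fun i j =>
        ge_of_tendsto (hlim i j) (Eventually.of_forall fun N => hsum0 S h0 N i j)
      have hinv0' : ∀ i j, 0 ≤ (1 - S')⁻¹ i j := fun i j =>
        ge_of_tendsto (hlim' i j) (Eventually.of_forall fun N => hsum0 S' h0' N i j)
      have hmono : ∀ v, (1 - S')⁻¹ v v ≤ (1 - S)⁻¹ v v := by
        intro v
        refine le_of_tendsto_of_tendsto (hlim' v v) (hlim v v)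
          (Eventually.of_forall fun N => ?_)
        simp only [Matrix.sum_apply]
        exact Finset.sum_le_sum fun p _ => (pow_entry_nonneg_le h0' hle' p v v).2
      have hkey : (1 - S)⁻¹ w w = (1 - S').det / (1 - S).det := by
        rw [Matrix.inv_def, Matrix.smul_apply, det_one_sub_zeroRC w S, Ring.inverse_eq_inv']
        rw [smul_eq_mul, div_eq_mul_inv, mul_comm]
      calc 1 / (1 - S).det
          = (1 - S').det / (1 - S).det * (1 / (1 - S').det) := by
            field_simp
        _ = (1 - S)⁻¹ w w * (1 / (1 - S').det) := by rw [hkey]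
        _ ≤ (1 - S)⁻¹ w w * ∏ v ∈ W', (1 - S')⁻¹ v v :=
            mul_le_mul_of_nonneg_left hIH (hinv0 w w)
        _ ≤ (1 - S)⁻¹ w w * ∏ v ∈ W', (1 - S)⁻¹ v v := by
            apply mul_le_mul_of_nonneg_left _ (hinv0 w w)
            exact Finset.prod_le_prod (fun v _ => hinv0' v v) (fun v _ => hmono v)
        _ = ∏ v ∈ insert w W', (1 - S)⁻¹ v v := by
            rw [Finset.prod_insert hw]

end Key


/-- If `S` is a nonnegative matrix with spectral radius `< 1` and `W`
is a cycle transversal of its digraph, then `1/det(I − S) ≤ ∏_{w ∈ W} (I − S)⁻¹(w,w)`. -/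
theorem stmt13 {n : ℕ} (S : Matrix (Fin n) (Fin n) ℝ)
    (hnonneg : ∀ i j, 0 ≤ S i j)
    (hrad : specRad S < 1)
    (W : Finset (Fin n))
    (hW : IsCycleTransversal (fun v w : Fin n => 0 < S v w) ↑W) :
    1 / (1 - S).det ≤ ∏ w ∈ W, (1 - S)⁻¹ w w := by
  rcases Nat.eq_zero_or_pos n with hn | hn
  · subst hn
    have hW0 : W = ∅ := Finset.eq_empty_of_isEmpty W
    subst hW0
    have : (1 - S).det = 1 := Matrix.det_isEmpty
    simp [this]
  · haveI : Nonempty (Fin n) := ⟨⟨0, hn⟩⟩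
    exact key W S hnonneg (lemA S hrad) hW
end

section
/- Let F be a finite digraph containing at least one cycle, let W be any positive weighting of its arcs, and let A_W(F) be the weighted adjacency matrix. Then the polynomial det(I − z·A_W(F)) in the variable z has degree at most |sct(F)|·ℓ_max(F); equivalently, the number of nonzero eigenvalues of A_W(F), counted with algebraic multiplicity, is at most |sct(F)|·ℓ_max(F). -/
open scoped Classical ENNReal

variable {V : Type*}

section Aux
variable {V : Type*} [Fintype V] [DecidableEq V] {D : V → V → Prop}

private lemma mem_S_inv (σ : Equiv.Perm V) (hσ : ∀ i, σ i = i ∨ D (σ i) i)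
    {x : V} (hx : D (σ x) x) : D (σ (σ⁻¹ x)) (σ⁻¹ x) := by
  rcases hσ (σ⁻¹ x) with h | h
  · have h1 : x = σ⁻¹ x := by simpa using h
    have h2 : σ x = x := by conv_lhs => rw [h1, (by simp : σ (σ⁻¹ x) = x)]
    rw [(by simp : σ (σ⁻¹ x) = x), ← h1]
    rwa [h2] at hx
  · exact h

private lemma mem_S_iter (σ : Equiv.Perm V) (hσ : ∀ i, σ i = i ∨ D (σ i) i)
    {x : V} (hx : D (σ x) x) (k : ℕ) : D (σ ((⇑σ⁻¹)^[k] x)) ((⇑σ⁻¹)^[k] x) := by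
  induction k with
  | zero => exact hx
  | succ k ih =>
      rw [Function.iterate_succ_apply']
      exact mem_S_inv σ hσ ih

end Aux

section Aux2
set_option linter.unusedSectionVars false
variable {V : Type*} [Fintype V] [DecidableEq V] {D : V → V → Prop}

private lemma exists_cycle (σ : Equiv.Perm V) (hσ : ∀ i, σ i = i ∨ D (σ i) i)
    {x : V} (hx : D (σ x) x) :
    ∃ γ : DiCycle D, (∀ j : ZMod γ.n, γ.vtx j = (⇑σ⁻¹)^[ZMod.val j] x) ∧
      (∀ k : ℕ, (⇑σ⁻¹)^[k] x = γ.vtx ((k : ℕ) : ZMod γ.n)) := by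
  set τ : V → V := ⇑σ⁻¹ with hτ
  set n := Function.minimalPeriod τ x with hn
  have hper : Function.IsPeriodicPt τ (orderOf σ⁻¹) x := by
    show τ^[orderOf σ⁻¹] x = x
    rw [hτ, Equiv.Perm.iterate_eq_pow, pow_orderOf_eq_one, Equiv.Perm.coe_one, id_eq]
  have hpos : 0 < n := hper.minimalPeriod_pos (orderOf_pos _)
  haveI : NeZero n := ⟨hpos.ne'⟩
  have hmod : ∀ k : ℕ, τ^[k % n] x = τ^[k] x := fun k =>
    Function.iterate_mod_minimalPeriod_eq
  refine ⟨⟨n, hpos, fun j => τ^[ZMod.val j] x, ?_, ?_⟩, fun j => rfl, ?_⟩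
  · intro a b hab
    apply ZMod.val_injective
    exact Function.iterate_injOn_Iio_minimalPeriod (ZMod.val_lt a) (ZMod.val_lt b) hab
  · intro j
    have e1 : (j + 1 : ZMod n) = ((ZMod.val j + 1 : ℕ) : ZMod n) := by
      rw [Nat.cast_add, Nat.cast_one, ZMod.natCast_zmod_val]
    have e2 : τ^[ZMod.val (j + 1 : ZMod n)] x = τ (τ^[ZMod.val j] x) := by
      rw [e1, ZMod.val_natCast, hmod, Function.iterate_succ_apply']
    show D (τ^[ZMod.val j] x) (τ^[ZMod.val (j + 1 : ZMod n)] x)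
    rw [e2]
    have h3 := mem_S_iter σ hσ hx (ZMod.val j + 1)
    rw [Function.iterate_succ_apply'] at h3
    simpa [hτ] using h3
  · intro k
    show τ^[k] x = τ^[ZMod.val ((k : ℕ) : ZMod n)] x
    rw [ZMod.val_natCast, hmod]
end Aux2

section Aux3
set_option linter.unusedSectionVars false
variable {V : Type*} [Fintype V] [DecidableEq V] {D : V → V → Prop}

private lemma iter_symm (σ : Equiv.Perm V) {a b : V} {k : ℕ}
    (hk : (⇑σ⁻¹)^[k] a = b) : ∃ j : ℕ, (⇑σ⁻¹)^[j] b = a := by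
  set τ : V → V := ⇑σ⁻¹ with hτ
  set m := orderOf (σ⁻¹ : Equiv.Perm V) with hm
  have hmpos : 0 < m := orderOf_pos _
  have hid : τ^[m] = _root_.id := by
    rw [hτ, Equiv.Perm.iterate_eq_pow, pow_orderOf_eq_one, Equiv.Perm.coe_one]
  refine ⟨k * (m - 1), ?_⟩
  rw [← hk, ← Function.iterate_add_apply]
  have h1 : m - 1 + 1 = m := Nat.succ_pred_eq_of_pos hmpos
  have hsum : k * (m - 1) + k = m * k := by
    conv_rhs => rw [← h1]
    ring
  rw [hsum, Function.iterate_mul, hid]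
  simp

private lemma card_S_le (σ : Equiv.Perm V) (hσ : ∀ i, σ i = i ∨ D (σ i) i)
    (T : Finset V) (hT : IsCycleTransversal D (↑T : Set V))
    (ℓ : ℕ) (hℓ : ∀ γ : DiCycle D, γ.n ≤ ℓ) :
    (Finset.univ.filter fun i => D (σ i) i).card ≤ T.card * ℓ := by
  classical
  set τ : V → V := ⇑σ⁻¹ with hτ
  set S := Finset.univ.filter fun i => D (σ i) i with hS
  have hmemS : ∀ x, x ∈ S ↔ D (σ x) x := by
    intro x; rw [hS, Finset.mem_filter]; simp
  have hrep : ∀ x ∈ S, ∃ y, y ∈ T ∧ ∃ k : ℕ, τ^[k] x = y := by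
    intro x hx
    obtain ⟨γ, hvtx, -⟩ := exists_cycle σ hσ ((hmemS x).1 hx)
    obtain ⟨j, hj⟩ := hT γ
    exact ⟨γ.vtx j, hj, ZMod.val j, (hvtx j).symm⟩
  choose! Y hY using hrep
  have hYT : ∀ x ∈ S, Y x ∈ T := fun x hx => (hY x hx).1
  have hmaps : ∀ x ∈ S, Y x ∈ S.image Y := fun x hx => Finset.mem_image_of_mem Y hx
  rw [Finset.card_eq_sum_card_fiberwise hmaps]
  have hfiber : ∀ a ∈ S.image Y, (S.filter fun x => Y x = a).card ≤ ℓ := by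
    intro a ha
    obtain ⟨x₀, hx₀, hx₀a⟩ := Finset.mem_image.1 ha
    obtain ⟨k₀, hk₀⟩ := (hY x₀ hx₀).2
    have haS : D (σ a) a := by
      have := mem_S_iter σ hσ ((hmemS x₀).1 hx₀) k₀
      rwa [hk₀, hx₀a] at this
    obtain ⟨γ, hvtx, hcast⟩ := exists_cycle σ hσ haS
    haveI : NeZero γ.n := ⟨γ.pos.ne'⟩
    have hsub : (S.filter fun x => Y x = a) ⊆ Finset.image γ.vtx Finset.univ := by
      intro x hxmem
      rw [Finset.mem_filter] at hxmem
      obtain ⟨hxS, hxa⟩ := hxmem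
      obtain ⟨k, hk⟩ := (hY x hxS).2
      rw [hxa] at hk
      obtain ⟨j, hj⟩ := iter_symm σ hk
      rw [hcast j] at hj
      exact Finset.mem_image.2 ⟨_, Finset.mem_univ _, hj⟩
    calc (S.filter fun x => Y x = a).card
        ≤ (Finset.image γ.vtx Finset.univ).card := Finset.card_le_card hsub
      _ ≤ Fintype.card (ZMod γ.n) := by
          simpa using Finset.card_image_le (s := (Finset.univ : Finset (ZMod γ.n))) (f := γ.vtx)
      _ = γ.n := by haveI : NeZero γ.n := ⟨γ.pos.ne'⟩; exact ZMod.card γ.n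
      _ ≤ ℓ := hℓ γ
  calc ∑ a ∈ S.image Y, (S.filter fun x => Y x = a).card
      ≤ ∑ _a ∈ S.image Y, ℓ := Finset.sum_le_sum hfiber
    _ = (S.image Y).card * ℓ := by rw [Finset.sum_const, smul_eq_mul]
    _ ≤ T.card * ℓ := by
        refine Nat.mul_le_mul_right _ (Finset.card_le_card ?_)
        intro a ha
        obtain ⟨x, hx, rfl⟩ := Finset.mem_image.1 ha
        exact hYT x hx
end Aux3


/-- For a finite digraph `F` containing at least one cycle and a
positive weighting `Wt` of its arcs with weighted adjacency matrix `A`, the polynomial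
`det(I − z·A)` has degree at most `|sct(F)|·ℓ_max(F)`. -/
theorem stmt14 {V : Type*} [Fintype V] [DecidableEq V] (D : V → V → Prop)
    (hcyc : Nonempty (DiCycle D))
    (Wt : V → V → ℝ) (hpos : ∀ v w, D v w → 0 < Wt v w) :
    (Matrix.det
        (1 - (Polynomial.X : Polynomial ℝ) •
          (Matrix.of fun v w : V =>
            if D v w then Wt v w else 0).map Polynomial.C)).natDegree ≤
      sInf {c : ℕ | ∃ T : Finset V, IsCycleTransversal D ↑T ∧ T.card = c} *
        sSup {m : ℕ | ∃ γ : DiCycle D, γ.n = m} := by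
  classical
  set ℓ := sSup {m : ℕ | ∃ γ : DiCycle D, γ.n = m} with hℓdef
  have hbdd : BddAbove {m : ℕ | ∃ γ : DiCycle D, γ.n = m} := by
    refine ⟨Fintype.card V, fun m hm => ?_⟩
    obtain ⟨γ, rfl⟩ := hm
    haveI : NeZero γ.n := ⟨γ.pos.ne'⟩
    calc γ.n = Fintype.card (ZMod γ.n) := (ZMod.card _).symm
      _ ≤ Fintype.card V := Fintype.card_le_of_injective _ γ.inj
  have hℓle : ∀ γ : DiCycle D, γ.n ≤ ℓ := fun γ => le_csSup hbdd ⟨γ, rfl⟩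
  have hTne : {c : ℕ | ∃ T : Finset V, IsCycleTransversal D ↑T ∧ T.card = c}.Nonempty :=
    ⟨(Finset.univ : Finset V).card, Finset.univ, fun γ => ⟨0, by simp⟩, rfl⟩
  obtain ⟨T, hT, hTcard⟩ := Nat.sInf_mem hTne
  rw [← hTcard]
  set M : Matrix V V (Polynomial ℝ) :=
    1 - (Polynomial.X : Polynomial ℝ) •
      (Matrix.of fun v w : V => if D v w then Wt v w else 0).map Polynomial.C with hM
  have hMentry : ∀ v w, M v w =
      (if v = w then (1 : Polynomial ℝ) else 0) -
        Polynomial.X * Polynomial.C (if D v w then Wt v w else 0) := by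
    intro v w
    simp [hM, Matrix.sub_apply, Matrix.one_apply, Matrix.smul_apply, Matrix.map_apply,
      smul_eq_mul]
  rw [Matrix.det_apply']
  refine Polynomial.natDegree_sum_le_of_forall_le _ _ fun σ _ => ?_
  refine (Polynomial.natDegree_mul_le).trans ?_
  rw [Polynomial.natDegree_intCast, zero_add]
  by_cases h0 : (∏ i, M (σ i) i) = 0
  · rw [h0, Polynomial.natDegree_zero]
    exact Nat.zero_le _
  · have hσ : ∀ i, σ i = i ∨ D (σ i) i := by
      intro i
      by_contra hc
      push_neg at hc
      exact h0 (Finset.prod_eq_zero (Finset.mem_univ i)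
        (by rw [hMentry]; simp [hc.1, hc.2]))
    have hent : ∀ i, (M (σ i) i).natDegree ≤ if D (σ i) i then 1 else 0 := by
      intro i
      rw [hMentry]
      by_cases hD : D (σ i) i
      · simp only [if_pos hD]
        refine (Polynomial.natDegree_sub_le _ _).trans ?_
        have h1 : (if σ i = i then (1 : Polynomial ℝ) else 0).natDegree = 0 := by
          split_ifs <;> simp
        have h2 : (Polynomial.X * Polynomial.C (Wt (σ i) i)).natDegree ≤ 1 := by
          refine (Polynomial.natDegree_mul_le).trans ?_
          simp [Polynomial.natDegree_X_le]
        exact max_le (by simp [h1]) h2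
      · rw [if_neg hD]
        simp only [if_neg hD, Polynomial.C_0, mul_zero, sub_zero]
        split_ifs <;> simp
    calc (∏ i, M (σ i) i).natDegree
        ≤ ∑ i, (M (σ i) i).natDegree := Polynomial.natDegree_prod_le _ _
      _ ≤ ∑ i, if D (σ i) i then 1 else 0 := Finset.sum_le_sum fun i _ => hent i
      _ = (Finset.univ.filter fun i => D (σ i) i).card := by
          rw [Finset.card_eq_sum_ones, Finset.sum_filter]
      _ ≤ T.card * ℓ := card_S_le σ hσ T hT ℓ hℓle
end

section
/- If a digraph D admits no finite cycle transversal, then D contains an infinite family of pairwise vertex-disjoint directed cycles. -/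
open scoped Classical ENNReal

variable {V : Type*}

/-- If a digraph `D` admits no finite cycle transversal, then `D`
contains an infinite family of pairwise vertex-disjoint directed cycles. -/
theorem stmt15 {V : Type*} (D : V → V → Prop)
    (h : ¬ ∃ T : Set V, T.Finite ∧ IsCycleTransversal D T) :
    ∃ f : ℕ → DiCycle D, ∀ i j : ℕ, i ≠ j →
      Disjoint (Set.range (f i).vtx) (Set.range (f j).vtx) := by
  push_neg at h
  have key : ∀ T : Set V, T.Finite → ∃ γ : DiCycle D, ∀ i, γ.vtx i ∉ T := by
    intro T hT
    have := h T hT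
    unfold IsCycleTransversal at this
    push_neg at this
    exact this
  have fin : ∀ γ : DiCycle D, (Set.range γ.vtx).Finite := by
    intro γ
    have : NeZero γ.n := ⟨γ.pos.ne'⟩
    exact Set.finite_range _
  let next : {T : Set V // T.Finite} → DiCycle D := fun T => (key T.1 T.2).choose
  have next_spec : ∀ T, ∀ i, (next T).vtx i ∉ T.1 := fun T => (key T.1 T.2).choose_spec
  let step : {T : Set V // T.Finite} → {T : Set V // T.Finite} :=
    fun T => ⟨Set.range (next T).vtx ∪ T.1, (fin _).union T.2⟩
  let acc : ℕ → {T : Set V // T.Finite} := fun n => step^[n] ⟨∅, Set.finite_empty⟩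
  let f : ℕ → DiCycle D := fun n => next (acc n)
  have hacc : ∀ n, acc (n+1) = step (acc n) := by
    intro n; simp only [acc, Function.iterate_succ_apply']
  have hsub : ∀ n, Set.range (f n).vtx ⊆ (acc (n+1)).1 := by
    intro n
    rw [hacc]
    exact Set.subset_union_left
  have hmono : ∀ m n, m ≤ n → (acc m).1 ⊆ (acc n).1 := by
    intro m n hmn
    induction n with
    | zero =>
      have : m = 0 := Nat.le_zero.mp hmn
      subst this; exact subset_rfl
    | succ n ih =>
      rcases Nat.lt_or_ge m (n+1) with h' | h'
      · exact (ih (Nat.lt_succ_iff.mp h')).trans (by rw [hacc]; exact Set.subset_union_right)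
      · have : m = n+1 := le_antisymm hmn h'
        subst this; exact subset_rfl
  have havoid : ∀ n i, (f n).vtx i ∉ (acc n).1 := fun n => next_spec (acc n)
  refine ⟨f, ?_⟩
  have main : ∀ i j, i < j → Disjoint (Set.range (f i).vtx) (Set.range (f j).vtx) := by
    intro i j hij
    rw [Set.disjoint_right]
    intro v hvj hvi
    obtain ⟨k, rfl⟩ := hvj
    exact havoid j k (hmono (i+1) j hij (hsub i hvi))
  intro i j hij
  rcases hij.lt_or_gt with h' | h'
  · exact main i j h'
  · exact (main j i h').symm
end

section
/- Let D be a (possibly infinite) strongly connected digraph admitting a finite cycle transversal, and let S be a substochastic weighting of D. Then the supremum over all proper cycles γ ⊂ D of the weight S(γ) is strictly less than 1. -/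
open scoped Classical ENNReal

variable {V : Type*}

/-- The arc set of a cycle. -/
def DiCycle.arcSet {D : V → V → Prop} (γ : DiCycle D) : Set (V × V) :=
  Set.range fun i : ZMod γ.n => (γ.vtx i, γ.vtx (i + 1))

/-- A cycle is proper if its arc set is a proper subset of the arc set of the digraph. -/
def DiCycle.Proper {D : V → V → Prop} (γ : DiCycle D) : Prop :=
  γ.arcSet ⊂ {p : V × V | D p.1 p.2}

/-- Strong connectivity. -/
def IsStrong (D : V → V → Prop) : Prop :=
  ∀ v w : V, v ≠ w → Relation.TransGen D v w

/-- The out-weight of a vertex. -/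
noncomputable def outWeight (D : V → V → Prop) (S : V → V → ℝ) (v : V) : ℝ≥0∞ :=
  ∑' w : {w // D v w}, ENNReal.ofReal (S v w)

/-- A substochastic weighting. -/
def IsSubstochastic (D : V → V → Prop) (S : V → V → ℝ) : Prop :=
  (∀ v w, D v w → 0 < S v w) ∧ ∀ v, outWeight D S v ≤ 1

/-- A truthly substochastic weighting. -/
def IsTruthlySubstochastic (D : V → V → Prop) (S : V → V → ℝ) : Prop :=
  IsSubstochastic D S ∧ ∃ v, outWeight D S v < 1

/-- The weight of a cycle: the product of the weights of its arcs. -/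
noncomputable def DiCycle.weight {D : V → V → Prop} (S : V → V → ℝ) (γ : DiCycle D) : ℝ :=
  haveI : NeZero γ.n := ⟨γ.pos.ne'⟩
  ∏ i : ZMod γ.n, S (γ.vtx i) (γ.vtx (i + 1))

/-- The gain of a cycle: the `ℓ(γ)`-th root of its weight. -/
noncomputable def DiCycle.gain {D : V → V → Prop} (S : V → V → ℝ) (γ : DiCycle D) : ℝ :=
  γ.weight S ^ ((γ.n : ℝ)⁻¹)

section aux

variable {D : V → V → Prop} {S : V → V → ℝ}

lemma arc_le_one (hS : IsSubstochastic D S) {v w : V} (h : D v w) : S v w ≤ 1 := by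
  have h1 : ENNReal.ofReal (S v w) ≤ outWeight D S v :=
    ENNReal.le_tsum (⟨w, h⟩ : {w // D v w})
  exact ENNReal.ofReal_le_one.mp (h1.trans (hS.2 v))

lemma arcs_sum_le_one (hS : IsSubstochastic D S) {v w1 w2 : V} (h1 : D v w1) (h2 : D v w2)
    (hne : w1 ≠ w2) : S v w1 + S v w2 ≤ 1 := by
  have hne' : (⟨w1, h1⟩ : {w // D v w}) ≠ ⟨w2, h2⟩ := fun h => hne (congrArg Subtype.val h)
  have key : ENNReal.ofReal (S v w1) + ENNReal.ofReal (S v w2) ≤ outWeight D S v := by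
    have := ENNReal.sum_le_tsum (f := fun w : {w // D v w} => ENNReal.ofReal (S v w))
      ({⟨w1, h1⟩, ⟨w2, h2⟩} : Finset {w // D v w})
    rwa [Finset.sum_pair hne'] at this
  have key2 : ENNReal.ofReal (S v w1 + S v w2) ≤ 1 := by
    rw [ENNReal.ofReal_add (hS.1 v w1 h1).le (hS.1 v w2 h2).le]
    exact key.trans (hS.2 v)
  exact ENNReal.ofReal_le_one.mp key2

lemma bad_unique (hS : IsSubstochastic D S) {v : V} (hb : ∃ w, D v w ∧ 1 ≤ S v w)
    {w1 w2 : V} (h1 : D v w1) (h2 : D v w2) : w1 = w2 := by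
  obtain ⟨w, hw, hw1⟩ := hb
  suffices h : ∀ x, D v x → x = w by rw [h w1 h1, h w2 h2]
  intro x hx
  by_contra hne
  have hsum := arcs_sum_le_one hS hx hw hne
  have hpos := hS.1 v x hx
  linarith

lemma good_of_not_bad (hS : IsSubstochastic D S) {v : V} (hb : ¬ ∃ w, D v w ∧ 1 ≤ S v w) :
    ∃ b < 1, ∀ w, D v w → S v w ≤ b := by
  push_neg at hb
  by_cases hex : ∃ w, D v w
  · obtain ⟨w0, hw0⟩ := hex
    by_cases hex2 : ∃ w1, D v w1 ∧ w1 ≠ w0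
    · obtain ⟨w1, hw1, hne⟩ := hex2
      have hp0 := hS.1 v w0 hw0
      have hp1 := hS.1 v w1 hw1
      refine ⟨1 - min (S v w0) (S v w1), sub_lt_self 1 (lt_min hp0 hp1), ?_⟩
      intro w hw
      by_cases hww : w = w0
      · have hsum := arcs_sum_le_one hS hw0 hw1 hne.symm
        have := min_le_right (S v w0) (S v w1)
        rw [hww]
        linarith
      · have hsum := arcs_sum_le_one hS hw hw0 hww
        have := min_le_left (S v w0) (S v w1)
        linarith
    · push_neg at hex2
      refine ⟨S v w0, hb w0 hw0, ?_⟩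
      intro w hw
      rw [hex2 w hw]
  · exact ⟨0, by norm_num, fun w hw => absurd ⟨w, hw⟩ hex⟩

lemma weight_le_arc (hS : IsSubstochastic D S) (γ : DiCycle D) (i : ZMod γ.n) :
    γ.weight S ≤ S (γ.vtx i) (γ.vtx (i + 1)) := by
  haveI : NeZero γ.n := ⟨γ.pos.ne'⟩
  have hpos : ∀ j : ZMod γ.n, 0 < S (γ.vtx j) (γ.vtx (j + 1)) := fun j => hS.1 _ _ (γ.arc j)
  have hle : ∀ j : ZMod γ.n, S (γ.vtx j) (γ.vtx (j + 1)) ≤ 1 := fun j => arc_le_one hS (γ.arc j)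
  show (∏ j : ZMod γ.n, S (γ.vtx j) (γ.vtx (j + 1))) ≤ _
  rw [← Finset.mul_prod_erase Finset.univ _ (Finset.mem_univ i)]
  exact mul_le_of_le_one_right (hpos i).le
    (Finset.prod_le_one (fun j _ => (hpos j).le) (fun j _ => hle j))

end aux

/-- The forced chain from `t`: keep following the unique heavy out-arc of bad vertices. -/
noncomputable def badChain (D : V → V → Prop) (S : V → V → ℝ) (t : V) : ℕ → V
  | 0 => t
  | k + 1 =>
    if h : ∃ w, D (badChain D S t k) w ∧ 1 ≤ S (badChain D S t k) w then h.choose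
    else badChain D S t k

lemma badChain_succ (D : V → V → Prop) (S : V → V → ℝ) (t : V) (k : ℕ)
    (h : ∃ w, D (badChain D S t k) w ∧ 1 ≤ S (badChain D S t k) w) :
    badChain D S t (k + 1) = h.choose := by
  simp only [badChain, dif_pos h]

/-- If a strongly connected digraph `D` admits a finite cycle
transversal and `S` is a substochastic weighting of `D`, then the supremum of the
weights `S(γ)` over all proper cycles `γ` of `D` is strictly less than `1`. -/
theorem stmt16 {V : Type*} (D : V → V → Prop) (hD : IsStrong D)
    (hT : ∃ T : Set V, T.Finite ∧ IsCycleTransversal D T)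
    (S : V → V → ℝ) (hS : IsSubstochastic D S) :
    ∃ c < (1 : ℝ), ∀ γ : DiCycle D, γ.Proper → γ.weight S ≤ c := by
  obtain ⟨T, hTfin, hTtr⟩ := hT
  have hP : ∀ t : V, ∃ b : ℝ, b < 1 ∧
      ∀ γ : DiCycle D, γ.Proper → (∃ i, γ.vtx i = t) → γ.weight S ≤ b := by
    intro t
    set u : ℕ → V := badChain D S t with hu
    by_cases hall : ∀ k, ∃ w, D (u k) w ∧ 1 ≤ S (u k) w
    · -- all chain vertices bad: no proper cycle through t
      refine ⟨0, by norm_num, ?_⟩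
      rintro γ hprop ⟨i0, hi0⟩
      exfalso
      haveI : NeZero γ.n := ⟨γ.pos.ne'⟩
      have hfollow : ∀ k : ℕ, γ.vtx (i0 + (k : ZMod γ.n)) = u k := by
        intro k
        induction k with
        | zero => rw [Nat.cast_zero, add_zero]; exact hi0
        | succ k ih =>
          have harc := γ.arc (i0 + (k : ZMod γ.n))
          rw [ih] at harc
          have hk := hall k
          have hv : γ.vtx (i0 + (k : ZMod γ.n) + 1) = hk.choose :=
            bad_unique hS hk harc hk.choose_spec.1
          rw [hu, badChain_succ D S t k hk, ← hv]
          congr 1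
          push_cast
          ring
      have hreach : ∀ v : V, Relation.TransGen D t v → ∃ k, u k = v := by
        intro v hv
        induction hv with
        | single hd =>
          exact ⟨1, (bad_unique hS (hall 0) (hall 0).choose_spec.1
            (by rwa [show u 0 = t from rfl])).symm ▸
            (badChain_succ D S t 0 (hall 0)).symm ▸ rfl⟩
        | tail hab hbc ih =>
          obtain ⟨k, hk⟩ := ih
          refine ⟨k + 1, ?_⟩
          rw [hu, badChain_succ D S t k (hall k)]
          exact bad_unique hS (hall k) (hall k).choose_spec.1 (hk ▸ hbc)
      have hsup : {p : V × V | D p.1 p.2} ⊆ γ.arcSet := by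
        rintro ⟨v, w⟩ hvw
        have hv : ∃ k, u k = v := by
          by_cases hvt : v = t
          · exact ⟨0, hvt.symm⟩
          · exact hreach v (hD t v (Ne.symm hvt))
        obtain ⟨k, hk⟩ := hv
        have hw : u (k + 1) = w := by
          rw [hu, badChain_succ D S t k (hall k)]
          exact bad_unique hS (hall k) (hall k).choose_spec.1 (hk ▸ hvw)
        refine ⟨i0 + (k : ZMod γ.n), ?_⟩
        have h1 := hfollow k
        have h2 := hfollow (k + 1)
        push_cast at h2
        simp only [Prod.mk.injEq]
        rw [← add_assoc] at h2
        exact ⟨h1.trans hk, h2.trans hw⟩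
      exact hprop.2 hsup
    · -- chain reaches a non-bad vertex
      have hex : ∃ k, ¬ ∃ w, D (u k) w ∧ 1 ≤ S (u k) w := not_forall.mp hall
      set k := Nat.find hex with hkdef
      have hkbad : ¬ ∃ w, D (u k) w ∧ 1 ≤ S (u k) w := Nat.find_spec hex
      have hmin : ∀ j < k, ∃ w, D (u j) w ∧ 1 ≤ S (u j) w := by
        intro j hj
        by_contra h
        exact Nat.find_min hex hj h
      obtain ⟨b, hb1, hb⟩ := good_of_not_bad hS hkbad
      refine ⟨b, hb1, ?_⟩
      rintro γ _ ⟨i0, hi0⟩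
      haveI : NeZero γ.n := ⟨γ.pos.ne'⟩
      have hfollow : ∀ j, j ≤ k → γ.vtx (i0 + (j : ZMod γ.n)) = u j := by
        intro j
        induction j with
        | zero => intro _; rw [Nat.cast_zero, add_zero]; exact hi0
        | succ j ih =>
          intro hj
          have hjk : j < k := Nat.lt_of_succ_le hj
          have ihj := ih hjk.le
          have harc := γ.arc (i0 + (j : ZMod γ.n))
          rw [ihj] at harc
          have hbj := hmin j hjk
          have hv : γ.vtx (i0 + (j : ZMod γ.n) + 1) = hbj.choose :=
            bad_unique hS hbj harc hbj.choose_spec.1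
          rw [hu, badChain_succ D S t j hbj, ← hv]
          congr 1
          push_cast
          ring
      have hk0 := hfollow k le_rfl
      have harc := γ.arc (i0 + (k : ZMod γ.n))
      rw [hk0] at harc
      calc γ.weight S ≤ S (γ.vtx (i0 + (k : ZMod γ.n))) (γ.vtx (i0 + (k : ZMod γ.n) + 1)) :=
            weight_le_arc hS γ _
        _ = S (u k) (γ.vtx (i0 + (k : ZMod γ.n) + 1)) := by rw [hk0]
        _ ≤ b := hb _ harc
  choose b hb using hP
  refine ⟨(insert (0 : ℝ) (hTfin.toFinset.image b)).max' (Finset.insert_nonempty _ _), ?_, ?_⟩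
  · rw [Finset.max'_lt_iff]
    intro x hx
    rcases Finset.mem_insert.mp hx with h | h
    · rw [h]; exact one_pos
    · obtain ⟨t, _, rfl⟩ := Finset.mem_image.mp h
      exact (hb t).1
  · intro γ hγ
    obtain ⟨i, hi⟩ := hTtr γ
    refine ((hb _).2 γ hγ ⟨i, rfl⟩).trans (Finset.le_max' _ _ ?_)
    exact Finset.mem_insert_of_mem
      (Finset.mem_image_of_mem b (hTfin.mem_toFinset.mpr hi))
end
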